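/- arXiv:2105.01271 — 8 statements merged into one kernel-verified Lean document; each statement's English description precedes it below -/
import Mathlib

section
/- Let A_f be an m×n real matrix, Q an m×r matrix with orthonormal columns, and let Â_f be a best rank-k approximation (in spectral norm) of QQᵀA_f. Then ‖A_f − Â_f‖₂ ≤ ‖(I − QQᵀ)A_f‖₂ + σ_{k+1}(A_f), where σ_{k+1}(A_f) is the (k+1)-th largest singular value of A_f. -/
open Matrix
open scoped Matrix.Norms.L2Operator

namespace Matrix

variable {𝕜 m n l : Type*} [RCLike 𝕜] [Fintype m] [Fintype n] [DecidableEq n]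
  [Fintype l] [DecidableEq l]

lemma l2_opNorm_one_le : ‖(1 : Matrix n n 𝕜)‖ ≤ 1 := by
  rw [← l2_opNorm_toEuclideanCLM, map_one, ContinuousLinearMap.one_def]
  exact ContinuousLinearMap.norm_id_le

lemma l2_opNorm_le_one_of_conjTranspose_mul_self_eq_one {Q : Matrix m l 𝕜} (hQ : Qᴴ * Q = 1) :
    ‖Q‖ ≤ 1 := by
  have h : ‖Q‖ * ‖Q‖ ≤ 1 := by
    rw [← l2_opNorm_conjTranspose_mul_self, hQ]
    exact l2_opNorm_one_le
  nlinarith [norm_nonneg Q]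

lemma l2_opNorm_mul_conjTranspose_mul_le [DecidableEq m] {Q : Matrix m l 𝕜} (hQ : Qᴴ * Q = 1)
    (A : Matrix m n 𝕜) : ‖Q * Qᴴ * A‖ ≤ ‖A‖ := by
  have hQ₁ := l2_opNorm_le_one_of_conjTranspose_mul_self_eq_one hQ
  have hQH₁ : ‖Qᴴ‖ ≤ 1 := (l2_opNorm_conjTranspose Q).trans_le hQ₁
  calc ‖Q * Qᴴ * A‖ = ‖Q * (Qᴴ * A)‖ := by rw [Matrix.mul_assoc]
    _ ≤ ‖Q‖ * (‖Qᴴ‖ * ‖A‖) :=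
        (l2_opNorm_mul _ _).trans (by gcongr; exact l2_opNorm_mul _ _)
    _ ≤ 1 * (1 * ‖A‖) := by gcongr
    _ = ‖A‖ := by ring

/-- Projecting a rank-`k` competitor `X` for `A` gives the rank-`k` competitor `QQᴴX` for `QQᴴA`,
which is no farther away. -/
lemma norm_proj_sub_bestRankApprox_le_sInf [DecidableEq m] {Q : Matrix m l 𝕜} (hQ : Qᴴ * Q = 1)
    {A Ahat : Matrix m n 𝕜} {k : ℕ}
    (hbest : ∀ X : Matrix m n 𝕜, X.rank ≤ k → ‖Q * Qᴴ * A - Ahat‖ ≤ ‖Q * Qᴴ * A - X‖) :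
    ‖Q * Qᴴ * A - Ahat‖ ≤ sInf {c : ℝ | ∃ X : Matrix m n 𝕜, X.rank ≤ k ∧ ‖A - X‖ = c} := by
  refine le_csInf ⟨‖A - 0‖, 0, by simp, rfl⟩ ?_
  rintro c ⟨X, hX, rfl⟩
  calc ‖Q * Qᴴ * A - Ahat‖ ≤ ‖Q * Qᴴ * A - Q * Qᴴ * X‖ :=
        hbest _ ((rank_mul_le_right _ _).trans hX)
    _ = ‖Q * Qᴴ * (A - X)‖ := by rw [Matrix.mul_sub]
    _ ≤ ‖A - X‖ := l2_opNorm_mul_conjTranspose_mul_le hQ _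

end Matrix

theorem stmt2_general {m n r k : ℕ}
    (A_f : Matrix (Fin m) (Fin n) ℝ) (Q : Matrix (Fin m) (Fin r) ℝ)
    (hQ : Qᵀ * Q = 1)
    (Ahat : Matrix (Fin m) (Fin n) ℝ)
    (hbest : ∀ X : Matrix (Fin m) (Fin n) ℝ, X.rank ≤ k →
      ‖Q * Qᵀ * A_f - Ahat‖ ≤ ‖Q * Qᵀ * A_f - X‖)
    (σ : ℝ)
    (hσ : σ = sInf {c : ℝ | ∃ X : Matrix (Fin m) (Fin n) ℝ, X.rank ≤ k ∧ ‖A_f - X‖ = c}) :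
    ‖A_f - Ahat‖ ≤ ‖A_f - Q * Qᵀ * A_f‖ + σ := by
  rw [← conjTranspose_eq_transpose_of_trivial] at hQ hbest ⊢
  have hproj : ‖Q * Qᴴ * A_f - Ahat‖ ≤ σ :=
    hσ ▸ norm_proj_sub_bestRankApprox_le_sInf hQ hbest
  calc ‖A_f - Ahat‖ = ‖(A_f - Q * Qᴴ * A_f) + (Q * Qᴴ * A_f - Ahat)‖ := by
        rw [sub_add_sub_cancel]
    _ ≤ ‖A_f - Q * Qᴴ * A_f‖ + ‖Q * Qᴴ * A_f - Ahat‖ := norm_add_le _ _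
    _ ≤ ‖A_f - Q * Qᴴ * A_f‖ + σ := by gcongr

/-- If `Â` is a best rank-`k` (spectral norm) approximation of `QQᵀA_f` where `Q` has
orthonormal columns, then `‖A_f - Â‖₂ ≤ ‖(I - QQᵀ)A_f‖₂ + σ_{k+1}(A_f)`, where
`σ_{k+1}(A_f)` is the spectral-norm distance of `A_f` to the rank-`k` matrices
(Eckart–Young). -/
theorem stmt2 {m n r k : ℕ}
    (A_f : Matrix (Fin m) (Fin n) ℝ) (Q : Matrix (Fin m) (Fin r) ℝ)
    (hQ : Qᵀ * Q = 1)
    (Ahat : Matrix (Fin m) (Fin n) ℝ)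
    (hrank : Ahat.rank ≤ k)
    (hbest : ∀ X : Matrix (Fin m) (Fin n) ℝ, X.rank ≤ k →
      ‖Q * Qᵀ * A_f - Ahat‖ ≤ ‖Q * Qᵀ * A_f - X‖)
    (σ : ℝ)
    (hσ : σ = sInf {c : ℝ | ∃ X : Matrix (Fin m) (Fin n) ℝ, X.rank ≤ k ∧ ‖A_f - X‖ = c}) :
    ‖A_f - Ahat‖ ≤ ‖A_f - Q * Qᵀ * A_f‖ + σ :=
  stmt2_general A_f Q hQ Ahat hbest σ hσ
end

section
/- Let A_f be an m×n real matrix, A_c an m×n_c real matrix, and τ > 0. Define ε(τ) = λ_max(A_fA_fᵀ − τA_cA_cᵀ), the maximum eigenvalue of the symmetric matrix A_fA_fᵀ − τA_cA_cᵀ. Let Ũ_r be the m×r matrix whose columns are the top r left singular vectors of A_c, let P_⊥ = I − Ũ_rŨ_rᵀ, and let σ_{c,r+1} be the (r+1)-th largest singular value of A_c. If ε(τ) ≥ 0 then ‖P_⊥ A_f‖₂ ≤ (ε(τ) + τσ_{c,r+1}²)^{1/2}. -/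
open Matrix
open scoped Matrix.Norms.L2Operator

private lemma quad_form_eq {m : ℕ} (U : Matrix (Fin m) (Fin m) ℝ) (d : Fin m → ℝ)
    (w : Fin m → ℝ) :
    w ⬝ᵥ ((U * Matrix.diagonal d * Uᵀ) *ᵥ w) = ∑ i, d i * ((Uᵀ *ᵥ w) i) ^ 2 := by
  rw [← Matrix.mulVec_mulVec, ← Matrix.mulVec_mulVec, Matrix.dotProduct_mulVec,
    ← Matrix.mulVec_transpose]
  simp only [dotProduct, Matrix.mulVec_diagonal]
  exact Finset.sum_congr rfl fun i _ => by ring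

private lemma dot_self_eq {m : ℕ} {U : Matrix (Fin m) (Fin m) ℝ} (hU : U * Uᵀ = 1)
    (w : Fin m → ℝ) : (Uᵀ *ᵥ w) ⬝ᵥ (Uᵀ *ᵥ w) = w ⬝ᵥ w := by
  rw [Matrix.dotProduct_mulVec, Matrix.vecMul_transpose, Matrix.mulVec_mulVec, hU,
    Matrix.one_mulVec]

private lemma norm_eq_sqrt_dot {m : ℕ} (v : Fin m → ℝ) :
    ‖(WithLp.equiv 2 (Fin m → ℝ)).symm v‖ = Real.sqrt (v ⬝ᵥ v) := by
  rw [EuclideanSpace.norm_eq]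
  congr 1
  simp [dotProduct, sq_abs, pow_two]

private lemma dot_self_nonneg' {m : ℕ} (v : Fin m → ℝ) : 0 ≤ v ⬝ᵥ v :=
  Finset.sum_nonneg fun i _ => mul_self_nonneg (v i)

private lemma svd_diag {m nc : ℕ} (σs : ℕ → ℝ) :
    (Matrix.of fun (i : Fin m) (j : Fin nc) => if (i : ℕ) = (j : ℕ) then σs (i : ℕ) else 0) *
      (Matrix.of fun (i : Fin m) (j : Fin nc) => if (i : ℕ) = (j : ℕ) then σs (i : ℕ) else 0)ᵀ =
    Matrix.diagonal (fun i : Fin m => if (i : ℕ) < nc then σs (i : ℕ) ^ 2 else 0) := by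
  ext i j
  simp only [Matrix.mul_apply, Matrix.transpose_apply, Matrix.of_apply, Matrix.diagonal_apply]
  rw [Fin.sum_univ_eq_sum_range
    (fun k => (if (i:ℕ) = k then σs i else 0) * (if (j:ℕ) = k then σs j else 0)) nc]
  by_cases hij : i = j
  · subst hij
    rw [if_pos rfl]
    calc ∑ k ∈ Finset.range nc, (if (i:ℕ) = k then σs i else 0) * (if (i:ℕ) = k then σs i else 0)
        = ∑ k ∈ Finset.range nc, (if (i:ℕ) = k then σs i ^ 2 else 0) :=
          Finset.sum_congr rfl fun k _ => by split_ifs <;> ring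
      _ = if (i:ℕ) ∈ Finset.range nc then σs i ^ 2 else 0 := Finset.sum_ite_eq _ _ _
      _ = _ := by simp [Finset.mem_range]
  · rw [if_neg hij]
    apply Finset.sum_eq_zero
    intro k _
    have : (i:ℕ) ≠ k ∨ (j:ℕ) ≠ k := by
      by_contra h
      push_neg at h
      exact hij (Fin.ext (h.1.trans h.2.symm))
    rcases this with h | h
    · rw [if_neg h, zero_mul]
    · rw [if_neg h, mul_zero]

private lemma coord_proj {m r : ℕ} (hrm : r ≤ m) (U0 : Matrix (Fin m) (Fin m) ℝ)
    (hU0 : U0ᵀ * U0 = 1) (y : Fin m → ℝ) (i : Fin m) :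
    (U0ᵀ *ᵥ (y - (U0.submatrix id (Fin.castLE hrm)) *ᵥ
      ((U0.submatrix id (Fin.castLE hrm))ᵀ *ᵥ y))) i
    = if (i : ℕ) < r then 0 else (U0ᵀ *ᵥ y) i := by
  have hmul : U0ᵀ * U0.submatrix id (Fin.castLE hrm)
      = (1 : Matrix (Fin m) (Fin m) ℝ).submatrix id (Fin.castLE hrm) := by
    ext a b
    have h := congrFun (congrFun hU0 a) (Fin.castLE hrm b)
    simp [Matrix.mul_apply, Matrix.submatrix_apply] at h ⊢
    exact h
  have hz : ∀ j : Fin r, ((U0.submatrix id (Fin.castLE hrm))ᵀ *ᵥ y) j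
      = (U0ᵀ *ᵥ y) (Fin.castLE hrm j) := by
    intro j
    simp [Matrix.mulVec, dotProduct, Matrix.submatrix_apply, Matrix.transpose_apply]
  rw [Matrix.mulVec_sub, Pi.sub_apply, Matrix.mulVec_mulVec, hmul]
  have hsum : ((1 : Matrix (Fin m) (Fin m) ℝ).submatrix id (Fin.castLE hrm) *ᵥ
      ((U0.submatrix id (Fin.castLE hrm))ᵀ *ᵥ y)) i
      = ∑ j : Fin r, if i = Fin.castLE hrm j then (U0ᵀ *ᵥ y) (Fin.castLE hrm j) else 0 := by
    simp [Matrix.mulVec, dotProduct, Matrix.one_apply, Matrix.submatrix_apply, hz,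
      ite_mul, zero_mul]
  rw [hsum]
  by_cases hi : (i : ℕ) < r
  · rw [if_pos hi]
    have hcond : ∀ j : Fin r, (i = Fin.castLE hrm j) = ((⟨(i : ℕ), hi⟩ : Fin r) = j) := by
      intro j
      simp [Fin.ext_iff]
    simp only [hcond]
    rw [Finset.sum_ite_eq]
    simp
  · rw [if_neg hi]
    have : ∀ j ∈ Finset.univ,
        (if i = Fin.castLE hrm j then (U0ᵀ *ᵥ y) (Fin.castLE hrm j) else 0 : ℝ) = 0 := by
      intro j _
      rw [if_neg]
      intro h
      exact hi (h ▸ j.isLt)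
    rw [Finset.sum_congr rfl this, Finset.sum_const_zero, sub_zero]

private lemma spectral_real {m : ℕ} (M : Matrix (Fin m) (Fin m) ℝ) (hM : M.IsHermitian) :
    ∃ V : Matrix (Fin m) (Fin m) ℝ, V * Vᵀ = 1 ∧
      M = V * Matrix.diagonal hM.eigenvalues * Vᵀ := by
  refine ⟨(hM.eigenvectorUnitary : Matrix (Fin m) (Fin m) ℝ), ?_, ?_⟩
  · have h := Matrix.mem_unitaryGroup_iff.mp hM.eigenvectorUnitary.2
    rwa [Matrix.star_eq_conjTranspose, Matrix.conjTranspose_eq_transpose_of_trivial] at h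
  · have h := hM.spectral_theorem
    rwa [Unitary.conjStarAlgAut_apply, Matrix.star_eq_conjTranspose, Matrix.conjTranspose_eq_transpose_of_trivial,
      show (RCLike.ofReal ∘ hM.eigenvalues : Fin m → ℝ) = hM.eigenvalues from funext fun i => rfl]
      at h

/-- With `ε(τ) = λ_max(A_fA_fᵀ - τ A_cA_cᵀ) ≥ 0`, `A_c = U0 S V0ᵀ` an SVD with
nonincreasing nonnegative singular values `σs`, and `Ur` the top `r` left singular
vectors of `A_c`, we have `‖(I - UrUrᵀ)A_f‖₂ ≤ (ε(τ) + τ σ_{c,r+1}²)^{1/2}`,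
where `σ_{c,r+1} = σs r` (0-indexed). -/
theorem stmt3 {m n nc r : ℕ} (hrm : r ≤ m)
    (A_f : Matrix (Fin m) (Fin n) ℝ) (A_c : Matrix (Fin m) (Fin nc) ℝ)
    (U0 : Matrix (Fin m) (Fin m) ℝ) (V0 : Matrix (Fin nc) (Fin nc) ℝ)
    (σs : ℕ → ℝ)
    (hU0 : U0ᵀ * U0 = 1) (hU0' : U0 * U0ᵀ = 1) (hV0 : V0ᵀ * V0 = 1)
    (hσs0 : ∀ i, 0 ≤ σs i) (hmono : ∀ i j : ℕ, i ≤ j → σs j ≤ σs i)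
    (hsvd : A_c = U0 * (Matrix.of fun (i : Fin m) (j : Fin nc) => if (i : ℕ) = (j : ℕ) then σs (i : ℕ) else 0) * V0ᵀ)
    (τ ε : ℝ) (hτ : 0 < τ)
    (hHerm : (A_f * A_fᵀ - τ • (A_c * A_cᵀ)).IsHermitian)
    (hε : ε = ⨆ i, hHerm.eigenvalues i) (hε0 : 0 ≤ ε)
    (Ur : Matrix (Fin m) (Fin r) ℝ)
    (hUr : Ur = U0.submatrix id (Fin.castLE hrm)) :
    ‖A_f - Ur * Urᵀ * A_f‖ ≤ Real.sqrt (ε + τ * σs r ^ 2) := by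
  classical
  subst hUr
  set Ur : Matrix (Fin m) (Fin r) ℝ := U0.submatrix id (Fin.castLE hrm) with hUr
  set K : ℝ := ε + τ * σs r ^ 2 with hKdef
  have hK0 : 0 ≤ K := add_nonneg hε0 (mul_nonneg hτ.le (sq_nonneg _))
  set dvec : Fin m → ℝ := fun i => if (i : ℕ) < nc then σs (i : ℕ) ^ 2 else 0 with hdvec
  -- A_c A_cᵀ = U0 D U0ᵀ
  have hAc : A_c * A_cᵀ = U0 * Matrix.diagonal dvec * U0ᵀ := by
    have h1 : ∀ X : Matrix (Fin nc) (Fin m) ℝ, V0ᵀ * (V0 * X) = X := fun X => by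
      rw [← Matrix.mul_assoc, hV0, Matrix.one_mul]
    rw [hsvd, show U0 * Matrix.diagonal dvec * U0ᵀ
        = U0 * ((Matrix.of fun (i : Fin m) (j : Fin nc) =>
            if (i : ℕ) = (j : ℕ) then σs (i : ℕ) else 0) *
          (Matrix.of fun (i : Fin m) (j : Fin nc) =>
            if (i : ℕ) = (j : ℕ) then σs (i : ℕ) else 0)ᵀ) * U0ᵀ from by
          rw [svd_diag]]
    simp only [Matrix.transpose_mul, Matrix.transpose_transpose, Matrix.mul_assoc, h1]
  -- the key quadratic bound
  have key : ∀ y : Fin m → ℝ,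
      ((A_f - Ur * Urᵀ * A_f)ᵀ *ᵥ y) ⬝ᵥ ((A_f - Ur * Urᵀ * A_f)ᵀ *ᵥ y) ≤ K * (y ⬝ᵥ y) := by
    intro y
    set w : Fin m → ℝ := y - Ur *ᵥ (Urᵀ *ᵥ y) with hw
    have hBty : (A_f - Ur * Urᵀ * A_f)ᵀ *ᵥ y = A_fᵀ *ᵥ w := by
      rw [Matrix.transpose_sub, Matrix.sub_mulVec, Matrix.transpose_mul, Matrix.transpose_mul,
        Matrix.transpose_transpose, hw, Matrix.mulVec_sub]
      congr 1
      rw [← Matrix.mulVec_mulVec, ← Matrix.mulVec_mulVec]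
    have hdotM : (A_fᵀ *ᵥ w) ⬝ᵥ (A_fᵀ *ᵥ w) = w ⬝ᵥ ((A_f * A_fᵀ) *ᵥ w) := by
      rw [Matrix.dotProduct_mulVec, Matrix.vecMul_transpose, Matrix.mulVec_mulVec,
        dotProduct_comm]
    -- coordinates
    set b : Fin m → ℝ := U0ᵀ *ᵥ y with hb
    have hc : ∀ i, (U0ᵀ *ᵥ w) i = if (i : ℕ) < r then 0 else b i := fun i =>
      coord_proj hrm U0 hU0 y i
    have hcc : (U0ᵀ *ᵥ w) ⬝ᵥ (U0ᵀ *ᵥ w) = w ⬝ᵥ w := dot_self_eq hU0' w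
    have hbb : b ⬝ᵥ b = y ⬝ᵥ y := dot_self_eq hU0' y
    have hwy : w ⬝ᵥ w ≤ y ⬝ᵥ y := by
      rw [← hcc, ← hbb]
      apply Finset.sum_le_sum
      intro i _
      rw [hc i]
      by_cases hi : (i : ℕ) < r
      · rw [if_pos hi]
        simpa using mul_self_nonneg (b i)
      · rw [if_neg hi]
    have hw0 : 0 ≤ w ⬝ᵥ w := dot_self_nonneg' w
    -- bound on the Hermitian part
    have h1 : w ⬝ᵥ ((A_f * A_fᵀ - τ • (A_c * A_cᵀ)) *ᵥ w) ≤ ε * (w ⬝ᵥ w) := by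
      obtain ⟨V, hV1, hVspec⟩ := spectral_real _ hHerm
      rw [hVspec, quad_form_eq]
      have hbd : BddAbove (Set.range hHerm.eigenvalues) :=
        Set.Finite.bddAbove (Set.finite_range _)
      calc ∑ i, hHerm.eigenvalues i * ((Vᵀ *ᵥ w) i) ^ 2
          ≤ ∑ i, ε * ((Vᵀ *ᵥ w) i) ^ 2 := by
            apply Finset.sum_le_sum
            intro i _
            exact mul_le_mul_of_nonneg_right (hε ▸ le_ciSup hbd i) (sq_nonneg _)
        _ = ε * ((Vᵀ *ᵥ w) ⬝ᵥ (Vᵀ *ᵥ w)) := by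
            rw [← Finset.mul_sum]
            congr 1
            simp [dotProduct, pow_two]
        _ = ε * (w ⬝ᵥ w) := by rw [dot_self_eq hV1]
    -- bound on the A_c part
    have h2 : w ⬝ᵥ ((A_c * A_cᵀ) *ᵥ w) ≤ σs r ^ 2 * (w ⬝ᵥ w) := by
      rw [hAc, quad_form_eq]
      calc ∑ i, dvec i * ((U0ᵀ *ᵥ w) i) ^ 2
          ≤ ∑ i, σs r ^ 2 * ((U0ᵀ *ᵥ w) i) ^ 2 := by
            apply Finset.sum_le_sum
            intro i _
            by_cases hi : (i : ℕ) < r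
            · rw [hc i, if_pos hi]
              simp
            · apply mul_le_mul_of_nonneg_right _ (sq_nonneg _)
              show (if (i : ℕ) < nc then σs (i : ℕ) ^ 2 else 0) ≤ σs r ^ 2
              by_cases hinc : (i : ℕ) < nc
              · rw [if_pos hinc]
                exact pow_le_pow_left₀ (hσs0 _) (hmono r i (le_of_not_gt hi)) 2
              · rw [if_neg hinc]
                exact sq_nonneg _
        _ = σs r ^ 2 * ((U0ᵀ *ᵥ w) ⬝ᵥ (U0ᵀ *ᵥ w)) := by
            rw [← Finset.mul_sum]
            congr 1
            simp [dotProduct, pow_two]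
        _ = σs r ^ 2 * (w ⬝ᵥ w) := by rw [hcc]
    -- combine
    have hsplit : w ⬝ᵥ ((A_f * A_fᵀ) *ᵥ w)
        = w ⬝ᵥ ((A_f * A_fᵀ - τ • (A_c * A_cᵀ)) *ᵥ w)
          + τ * (w ⬝ᵥ ((A_c * A_cᵀ) *ᵥ w)) := by
      rw [Matrix.sub_mulVec, dotProduct_sub, Matrix.smul_mulVec,
        dotProduct_smul, smul_eq_mul]
      ring
    rw [hBty, hdotM, hsplit, hKdef]
    nlinarith [sq_nonneg (σs r)]
  -- conclude via the operator norm
  have hnorm : ∀ B : Matrix (Fin m) (Fin n) ℝ, ‖B‖ = ‖Bᵀ‖ := fun B => by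
    rw [← Matrix.conjTranspose_eq_transpose_of_trivial, Matrix.l2_opNorm_conjTranspose]
  rw [hnorm, Matrix.l2_opNorm_def]
  apply ContinuousLinearMap.opNorm_le_bound _ (Real.sqrt_nonneg _)
  intro x
  set y : Fin m → ℝ := (WithLp.equiv 2 (Fin m → ℝ)) x with hy
  have hx : x = (WithLp.equiv 2 (Fin m → ℝ)).symm y := (Equiv.symm_apply_apply _ x).symm
  have happ : (Matrix.toEuclideanLin.trans LinearMap.toContinuousLinearMap)
      (A_f - Ur * Urᵀ * A_f)ᵀ x
      = (WithLp.equiv 2 (Fin n → ℝ)).symm ((A_f - Ur * Urᵀ * A_f)ᵀ *ᵥ y) := rfl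
  rw [happ, norm_eq_sqrt_dot, hx, norm_eq_sqrt_dot, ← Real.sqrt_mul hK0]
  exact Real.sqrt_le_sqrt (key y)
end

section
/- Let A_f be an m×n real matrix, A_c an m×n_c real matrix, and τ > 0 with ε(τ) = λ_max(A_fA_fᵀ − τA_cA_cᵀ) ≥ 0. Let Ũ_r consist of the top r left singular vectors of A_c with r ≤ rank(A_c), let P_r = Ũ_rŨ_rᵀ be the orthogonal projection onto their span, let A_c⁺ denote the Moore–Penrose pseudoinverse of A_c, and let σ_{c,r} > 0 be the r-th largest singular value of A_c. Then ‖A_c⁺ P_r A_f‖₂ ≤ (τ + ε(τ)·σ_{c,r}^{-2})^{1/2}. -/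
open Matrix
open scoped Matrix.Norms.L2Operator


private lemma sum_pick {m : ℕ} (f : Fin m → ℝ) (v : ℕ) (hv : v < m) :
    (∑ k : Fin m, if (k : ℕ) = v then f k else 0) = f ⟨v, hv⟩ := by
  rw [Finset.sum_eq_single (⟨v, hv⟩ : Fin m)]
  · simp
  · intro b _ hb
    rw [if_neg]
    simpa [Fin.ext_iff] using hb
  · simp

private lemma sum_ite_lt {m r : ℕ} (hrm : r ≤ m) (h : ℕ → ℝ) :
    (∑ i : Fin m, if (i : ℕ) < r then h (i : ℕ) else 0) = ∑ k : Fin r, h (k : ℕ) := by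
  rw [Fin.sum_univ_eq_sum_range (fun i => if i < r then h i else 0) m,
    Fin.sum_univ_eq_sum_range (fun i => h i) r]
  rw [← Finset.sum_subset (Finset.range_subset_range.2 hrm)
    (fun x _ hx => by rw [if_neg (by simpa using hx)])]
  exact Finset.sum_congr rfl fun x hx => if_pos (Finset.mem_range.1 hx)

private lemma dot_self_mulVec {a b : ℕ} (A : Matrix (Fin a) (Fin b) ℝ) (z : Fin a → ℝ) :
    (Aᵀ *ᵥ z) ⬝ᵥ (Aᵀ *ᵥ z) = z ⬝ᵥ ((A * Aᵀ) *ᵥ z) := by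
  rw [dotProduct_mulVec, ← mulVec_transpose, transpose_transpose, mulVec_mulVec,
    dotProduct_comm]

private lemma dot_orth {a b : ℕ} (M : Matrix (Fin a) (Fin b) ℝ) (h : Mᵀ * M = 1)
    (w : Fin b → ℝ) : (M *ᵥ w) ⬝ᵥ (M *ᵥ w) = w ⬝ᵥ w := by
  have := dot_self_mulVec Mᵀ w
  rw [transpose_transpose, h, one_mulVec] at this
  exact this

private lemma quad_le {k : ℕ} (hk : 0 < k) (H : Matrix (Fin k) (Fin k) ℝ)
    (hH : H.IsHermitian) (z : Fin k → ℝ) :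
    z ⬝ᵥ (H *ᵥ z) ≤ (⨆ i, hH.eigenvalues i) * (z ⬝ᵥ z) := by
  haveI : Nonempty (Fin k) := ⟨⟨0, hk⟩⟩
  set U : Matrix (Fin k) (Fin k) ℝ := (hH.eigenvectorUnitary : Matrix (Fin k) (Fin k) ℝ) with hU
  have hstar : star U = Uᵀ := by
    rw [star_eq_conjTranspose]; ext i j; simp [conjTranspose_apply]
  have hUU : U * Uᵀ = 1 := by
    rw [← hstar]; exact Unitary.mul_star_self_of_mem (hH.eigenvectorUnitary).prop
  have hUtU : Uᵀ * U = 1 := by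
    rw [← hstar]; exact Unitary.star_mul_self_of_mem (hH.eigenvectorUnitary).prop
  set lam := hH.eigenvalues with hlam
  have hdiag : H = U * diagonal lam * Uᵀ := by
    have := hH.spectral_theorem
    rw [Unitary.conjStarAlgAut_apply, ← hU, hstar] at this
    exact this
  set w := Uᵀ *ᵥ z with hw
  have h1 : z ⬝ᵥ (H *ᵥ z) = w ⬝ᵥ (diagonal lam *ᵥ w) := by
    rw [hdiag, ← mulVec_mulVec, ← mulVec_mulVec, dotProduct_mulVec, ← mulVec_transpose]
  have h2 : w ⬝ᵥ w = z ⬝ᵥ z := by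
    rw [hw]
    exact dot_orth Uᵀ (by rw [transpose_transpose, hUU]) z
  have hle : ∀ i, lam i ≤ ⨆ j, lam j := fun i =>
    le_ciSup (Set.Finite.bddAbove (Set.finite_range lam)) i
  calc z ⬝ᵥ (H *ᵥ z) = ∑ i, lam i * (w i * w i) := by
        rw [h1]; simp only [dotProduct, mulVec_diagonal]
        exact Finset.sum_congr rfl fun i _ => by ring
    _ ≤ ∑ i, (⨆ j, lam j) * (w i * w i) := by
        refine Finset.sum_le_sum fun i _ => mul_le_mul_of_nonneg_right (hle i) (mul_self_nonneg _)
    _ = (⨆ j, lam j) * (w ⬝ᵥ w) := by rw [← Finset.mul_sum]; rfl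
    _ = (⨆ j, lam j) * (z ⬝ᵥ z) := by rw [h2]

private lemma opnorm_le {a b : ℕ} (A : Matrix (Fin a) (Fin b) ℝ) (c : ℝ) (hc : 0 ≤ c)
    (h : ∀ x : Fin b → ℝ, (A *ᵥ x) ⬝ᵥ (A *ᵥ x) ≤ c ^ 2 * (x ⬝ᵥ x)) : ‖A‖ ≤ c := by
  rw [Matrix.l2_opNorm_def]
  refine ContinuousLinearMap.opNorm_le_bound _ hc fun x => ?_
  have heq : ((Matrix.toEuclideanLin.trans LinearMap.toContinuousLinearMap) A) x
      = (EuclideanSpace.equiv (Fin a) ℝ).symm (A *ᵥ ((EuclideanSpace.equiv (Fin b) ℝ) x)) := rfl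
  set v : Fin b → ℝ := (EuclideanSpace.equiv (Fin b) ℝ) x with hv
  have hnx : ‖x‖ = Real.sqrt (v ⬝ᵥ v) := by
    rw [EuclideanSpace.norm_eq]
    congr 1
    simp only [dotProduct, Real.norm_eq_abs, pow_two]
    exact Finset.sum_congr rfl fun i _ => (abs_mul_abs_self _)
  have hnu : ‖((Matrix.toEuclideanLin.trans LinearMap.toContinuousLinearMap) A) x‖
      = Real.sqrt ((A *ᵥ v) ⬝ᵥ (A *ᵥ v)) := by
    rw [heq, EuclideanSpace.norm_eq]
    congr 1
    simp [dotProduct, Real.norm_eq_abs, sq_abs, pow_two]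
  rw [hnu, hnx]
  calc Real.sqrt ((A *ᵥ v) ⬝ᵥ (A *ᵥ v)) ≤ Real.sqrt (c ^ 2 * (v ⬝ᵥ v)) :=
        Real.sqrt_le_sqrt (h v)
    _ = c * Real.sqrt (v ⬝ᵥ v) := by
        rw [Real.sqrt_mul (by positivity), Real.sqrt_sq hc]

/-- With `ε(τ) = λ_max(A_fA_fᵀ - τ A_cA_cᵀ) ≥ 0`, `A_c = U0 S V0ᵀ` an SVD with
nonincreasing nonnegative singular values `σs`, `Ur` the top `r` left singular vectors,
`Apinv` the Moore–Penrose pseudoinverse of `A_c`, and `σ_{c,r} = σs (r-1) > 0`, we have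
`‖A_c⁺ (UrUrᵀ) A_f‖₂ ≤ (τ + ε(τ) σ_{c,r}⁻²)^{1/2}`. -/
theorem stmt4 {m n nc r : ℕ} (hrm : r ≤ m) (hr : r ≤ nc) (hr0 : 0 < r)
    (A_f : Matrix (Fin m) (Fin n) ℝ) (A_c : Matrix (Fin m) (Fin nc) ℝ)
    (U0 : Matrix (Fin m) (Fin m) ℝ) (V0 : Matrix (Fin nc) (Fin nc) ℝ)
    (σs : ℕ → ℝ)
    (hU0 : U0ᵀ * U0 = 1) (hU0' : U0 * U0ᵀ = 1) (hV0 : V0ᵀ * V0 = 1)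
    (hσs0 : ∀ i, 0 ≤ σs i) (hmono : ∀ i j : ℕ, i ≤ j → σs j ≤ σs i)
    (hsvd : A_c = U0 * (Matrix.of fun (i : Fin m) (j : Fin nc) => if (i : ℕ) = (j : ℕ) then σs (i : ℕ) else 0) * V0ᵀ)
    (τ ε : ℝ) (hτ : 0 < τ)
    (hHerm : (A_f * A_fᵀ - τ • (A_c * A_cᵀ)).IsHermitian)
    (hε : ε = ⨆ i, hHerm.eigenvalues i) (hε0 : 0 ≤ ε)
    (hσpos : 0 < σs (r - 1))
    (Ur : Matrix (Fin m) (Fin r) ℝ)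
    (hUr : Ur = U0.submatrix id (Fin.castLE hrm))
    (Apinv : Matrix (Fin nc) (Fin m) ℝ)
    (hApinv : Apinv = V0 *
      (Matrix.of fun (i : Fin nc) (j : Fin m) => if (i : ℕ) = (j : ℕ) ∧ σs (i : ℕ) ≠ 0 then (σs (i : ℕ))⁻¹ else 0) *
      U0ᵀ) :
    ‖Apinv * (Ur * Urᵀ) * A_f‖ ≤ Real.sqrt (τ + ε / σs (r - 1) ^ 2) := by
  have hσ : (0:ℝ) < σs (r - 1) := hσpos
  have hbound : (0:ℝ) ≤ τ + ε / σs (r - 1) ^ 2 := by positivity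
  have hσk : ∀ k : ℕ, k < r → 0 < σs k := fun k hk =>
    lt_of_lt_of_le hσ (hmono k (r-1) (by omega))
  set D : Matrix (Fin m) (Fin nc) ℝ :=
    Matrix.of (fun (i : Fin m) (j : Fin nc) => if (i : ℕ) = (j : ℕ) then σs (i : ℕ) else 0) with hD
  set Dp : Matrix (Fin nc) (Fin m) ℝ :=
    Matrix.of (fun (i : Fin nc) (j : Fin m) =>
      if (i : ℕ) = (j : ℕ) ∧ σs (i : ℕ) ≠ 0 then (σs (i : ℕ))⁻¹ else 0) with hDp
  set F : Matrix (Fin m) (Fin nc) ℝ :=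
    Matrix.of (fun (i : Fin m) (j : Fin nc) =>
      if (i : ℕ) = (j : ℕ) ∧ (i : ℕ) < r then (σs (i : ℕ))⁻¹ else 0) with hF
  set d : Fin m → ℝ := fun i => if (i : ℕ) < r then 1 else 0 with hd
  set G : Matrix (Fin nc) (Fin nc) ℝ :=
    Matrix.diagonal (fun j : Fin nc => if (j : ℕ) < r then (1:ℝ) else 0) with hG
  have hM1 : Ur * Urᵀ = U0 * Matrix.diagonal d * U0ᵀ := by
    ext i j
    have key := sum_ite_lt hrm (fun t => if ht : t < m then U0 i ⟨t, ht⟩ * U0 j ⟨t, ht⟩ else 0)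
    have lhs : (Ur * Urᵀ) i j = ∑ k : Fin r,
        (fun t => if ht : t < m then U0 i ⟨t, ht⟩ * U0 j ⟨t, ht⟩ else 0) (k : ℕ) := by
      rw [Matrix.mul_apply]
      refine Finset.sum_congr rfl fun k _ => ?_
      have hk : (k:ℕ) < m := lt_of_lt_of_le k.2 hrm
      simp only [hUr, Matrix.transpose_apply, Matrix.submatrix_apply, id, dif_pos hk]
      rfl
    have rhs : (U0 * Matrix.diagonal d * U0ᵀ) i j = ∑ x : Fin m, if (x:ℕ) < r then
        (fun t => if ht : t < m then U0 i ⟨t, ht⟩ * U0 j ⟨t, ht⟩ else 0) (x:ℕ) else 0 := by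
      rw [Matrix.mul_apply]
      refine Finset.sum_congr rfl fun x _ => ?_
      rw [Matrix.mul_diagonal, Matrix.transpose_apply]
      by_cases hx : (x:ℕ) < r <;> simp [hd, hx, Fin.eta, x.2]
    rw [lhs, rhs, ← key]
  have hApinvT : Apinvᵀ = U0 * (Dpᵀ * V0ᵀ) := by
    rw [hApinv, Matrix.transpose_mul, Matrix.transpose_mul, Matrix.transpose_transpose]
  have hAcT : A_cᵀ = V0 * (Dᵀ * U0ᵀ) := by
    rw [hsvd, Matrix.transpose_mul, Matrix.transpose_mul, Matrix.transpose_transpose]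
  have hdF : Matrix.diagonal d * Dpᵀ = F := by
    ext i j
    rw [Matrix.diagonal_mul, Matrix.transpose_apply]
    by_cases h1 : (i:ℕ) < r
    · by_cases h2 : (i:ℕ) = (j:ℕ)
      · have h2' : (j:ℕ) = (i:ℕ) := h2.symm
        have hσj : σs (i:ℕ) ≠ 0 := ne_of_gt (hσk _ h1)
        simp [hd, hDp, hF, h1, h2', hσj]
      · have h2' : ¬ ((j:ℕ) = (i:ℕ)) := fun h => h2 h.symm
        simp [hd, hDp, hF, h2, h2']
    · simp [hd, hDp, hF, h1]
  have hM2 : (Ur * Urᵀ) * Apinvᵀ = U0 * F * V0ᵀ := by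
    rw [hM1, hApinvT]
    simp only [Matrix.mul_assoc]
    rw [← Matrix.mul_assoc U0ᵀ U0, hU0, Matrix.one_mul,
      ← Matrix.mul_assoc (Matrix.diagonal d) Dpᵀ V0ᵀ, hdF]
  have hDF : Dᵀ * F = G := by
    ext i j
    rw [Matrix.mul_apply, hG, Matrix.diagonal_apply]
    have step : ∀ k : Fin m, Dᵀ i k * F k j =
        if (k:ℕ) = (i:ℕ) then
          σs (k:ℕ) * (if (k:ℕ) = (j:ℕ) ∧ (k:ℕ) < r then (σs (k:ℕ))⁻¹ else 0) else 0 := by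
      intro k
      rw [Matrix.transpose_apply]
      by_cases hk : (k:ℕ) = (i:ℕ) <;> simp [hD, hF, hk]
    rw [Finset.sum_congr rfl fun k _ => step k]
    by_cases him : (i:ℕ) < m
    · rw [sum_pick _ _ him]
      by_cases hij : i = j
      · subst hij
        by_cases h1 : (i:ℕ) < r
        · simp [h1, mul_inv_cancel₀ (ne_of_gt (hσk _ h1))]
        · simp [h1]
      · rw [if_neg hij]
        have h2 : ¬((i:ℕ) = (j:ℕ)) := fun h => hij (Fin.ext h)
        simp [h2]
    · rw [Finset.sum_eq_zero fun k _ => if_neg (fun h => him (lt_of_eq_of_lt h.symm k.2))]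
      have h1 : ¬ ((i:ℕ) < r) := fun h => him (lt_of_lt_of_le h hrm)
      by_cases hij : i = j
      · subst hij; simp [h1]
      · rw [if_neg hij]
  have hM3 : A_cᵀ * (U0 * F * V0ᵀ) = V0 * G * V0ᵀ := by
    rw [hAcT]
    simp only [Matrix.mul_assoc]
    rw [← Matrix.mul_assoc U0ᵀ U0, hU0, Matrix.one_mul, ← Matrix.mul_assoc Dᵀ F V0ᵀ, hDF]
  set M := Apinv * (Ur * Urᵀ) * A_f with hM
  have hMt : Mᵀ = A_fᵀ * (U0 * F * V0ᵀ) := by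
    rw [hM, Matrix.transpose_mul, Matrix.transpose_mul, Matrix.transpose_mul,
      Matrix.transpose_transpose, hM2]
  have hMH : Mᴴ = Mᵀ := by ext i j; simp [Matrix.conjTranspose_apply]
  rw [show ‖M‖ = ‖Mᵀ‖ by rw [← hMH, Matrix.l2_opNorm_conjTranspose]]
  refine opnorm_le _ _ (Real.sqrt_nonneg _) fun y => ?_
  rw [Real.sq_sqrt hbound]
  set c : Fin nc → ℝ := V0ᵀ *ᵥ y with hc
  set fc : Fin m → ℝ := F *ᵥ c with hfc
  set z : Fin m → ℝ := U0 *ᵥ fc with hz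
  set cnat : ℕ → ℝ := fun k => if h : k < nc then c ⟨k, h⟩ else 0 with hcnat
  have hMy : Mᵀ *ᵥ y = A_fᵀ *ᵥ z := by
    rw [hMt, hz, hfc, hc, Matrix.mulVec_mulVec, Matrix.mulVec_mulVec, Matrix.mulVec_mulVec]
    congr 1
    simp only [Matrix.mul_assoc]
  have hAcz : A_cᵀ *ᵥ z = V0 *ᵥ (G *ᵥ c) := by
    have e1 : A_cᵀ *ᵥ z = (A_cᵀ * (U0 * F * V0ᵀ)) *ᵥ y := by
      rw [hz, hfc, hc, Matrix.mulVec_mulVec, Matrix.mulVec_mulVec, Matrix.mulVec_mulVec]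
      congr 1
      simp only [Matrix.mul_assoc]
    have e2 : V0 *ᵥ (G *ᵥ c) = (V0 * G * V0ᵀ) *ᵥ y := by
      rw [hc, Matrix.mulVec_mulVec, Matrix.mulVec_mulVec]
    rw [e1, e2, hM3]
  have hFc : ∀ i : Fin m, fc i = if (i:ℕ) < r then (σs (i:ℕ))⁻¹ * cnat (i:ℕ) else 0 := by
    intro i
    rw [hfc]
    show (∑ j, F i j * c j) = _
    by_cases hi : (i:ℕ) < r
    · have hinc : (i:ℕ) < nc := lt_of_lt_of_le hi hr
      rw [Finset.sum_congr rfl fun j _ => show F i j * c j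
          = if (j:ℕ) = (i:ℕ) then (σs (i:ℕ))⁻¹ * c j else 0 from by
        by_cases hj : (j:ℕ) = (i:ℕ)
        · simp [hF, hj, hi]
        · have hj' : ¬ ((i:ℕ) = (j:ℕ)) := fun h => hj h.symm
          simp [hF, hj, hj']]
      rw [sum_pick _ _ hinc]
      simp [hcnat, hi, hinc]
    · rw [if_neg hi]
      refine Finset.sum_eq_zero fun j _ => ?_
      simp [hF, hi]
  have hGc : ∀ j : Fin nc, (G *ᵥ c) j = if (j:ℕ) < r then c j else 0 := by
    intro j
    rw [hG, Matrix.mulVec_diagonal]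
    by_cases hj : (j:ℕ) < r <;> simp [hj]
  have hV0' : V0 * V0ᵀ = 1 := mul_eq_one_comm.mp hV0
  have hcc : c ⬝ᵥ c = y ⬝ᵥ y := by
    rw [hc]
    exact dot_orth V0ᵀ (by rw [Matrix.transpose_transpose, hV0']) y
  set Q : ℝ := ∑ k : Fin r, (cnat (k:ℕ))^2 with hQdef
  have hfcfc : fc ⬝ᵥ fc = ∑ k : Fin r, ((σs (k:ℕ))⁻¹ * cnat (k:ℕ))^2 := by
    have hterm : ∀ i : Fin m, fc i * fc i
        = if (i:ℕ) < r then ((σs (i:ℕ))⁻¹ * cnat (i:ℕ))^2 else 0 := by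
      intro i
      rw [hFc i]
      by_cases hi : (i:ℕ) < r <;> simp [hi, pow_two]
    show (∑ i, fc i * fc i) = _
    rw [Finset.sum_congr rfl fun i _ => hterm i]
    exact sum_ite_lt hrm (fun t => ((σs t)⁻¹ * cnat t)^2)
  have hzz : z ⬝ᵥ z = ∑ k : Fin r, ((σs (k:ℕ))⁻¹ * cnat (k:ℕ))^2 := by
    rw [hz]
    exact (dot_orth U0 hU0 fc).trans hfcfc
  have hQ : (A_cᵀ *ᵥ z) ⬝ᵥ (A_cᵀ *ᵥ z) = Q := by
    rw [hAcz, dot_orth V0 hV0]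
    have hterm : ∀ j : Fin nc, (G *ᵥ c) j * (G *ᵥ c) j
        = if (j:ℕ) < r then (cnat (j:ℕ))^2 else 0 := by
      intro j
      rw [hGc j]
      by_cases hj : (j:ℕ) < r <;> simp [hj, hcnat, pow_two, j.2]
    show (∑ j, (G *ᵥ c) j * (G *ᵥ c) j) = Q
    rw [Finset.sum_congr rfl fun j _ => hterm j]
    exact (sum_ite_lt hr (fun t => (cnat t)^2)).trans hQdef.symm
  have hzzle : z ⬝ᵥ z ≤ ((σs (r-1))⁻¹)^2 * Q := by
    rw [hzz, hQdef, Finset.mul_sum]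
    refine Finset.sum_le_sum fun k _ => ?_
    have h1 : (σs (k:ℕ))⁻¹ ≤ (σs (r-1))⁻¹ :=
      inv_anti₀ hσ (hmono (k:ℕ) (r-1) (by omega))
    calc ((σs (k:ℕ))⁻¹ * cnat (k:ℕ))^2 = ((σs (k:ℕ))⁻¹)^2 * (cnat (k:ℕ))^2 := by ring
      _ ≤ ((σs (r-1))⁻¹)^2 * (cnat (k:ℕ))^2 := by
          exact mul_le_mul_of_nonneg_right
            (pow_le_pow_left₀ (inv_nonneg.2 (hσs0 _)) h1 2) (sq_nonneg _)
  have hQle : Q ≤ y ⬝ᵥ y := by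
    rw [← hcc]
    calc Q = ∑ j : Fin nc, if (j:ℕ) < r then (cnat (j:ℕ))^2 else 0 :=
          hQdef.trans (sum_ite_lt hr (fun t => (cnat t)^2)).symm
      _
        ≤ ∑ j : Fin nc, (cnat (j:ℕ))^2 := by
          refine Finset.sum_le_sum fun j _ => ?_
          by_cases hj : (j:ℕ) < r
          · rw [if_pos hj]
          · rw [if_neg hj]; exact sq_nonneg _
      _ = c ⬝ᵥ c := by
          show _ = ∑ j, c j * c j
          refine Finset.sum_congr rfl fun j _ => ?_
          simp [hcnat, j.2, pow_two]
  have hQ0 : (0:ℝ) ≤ Q := Finset.sum_nonneg fun k _ => sq_nonneg _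
  have hyy0 : (0:ℝ) ≤ y ⬝ᵥ y := Finset.sum_nonneg fun i _ => mul_self_nonneg _
  have hquad := quad_le (lt_of_lt_of_le hr0 hrm) _ hHerm z
  rw [← hε] at hquad
  have hsplit : z ⬝ᵥ ((A_f * A_fᵀ) *ᵥ z)
      = z ⬝ᵥ ((A_f * A_fᵀ - τ • (A_c * A_cᵀ)) *ᵥ z) + τ * (z ⬝ᵥ ((A_c * A_cᵀ) *ᵥ z)) := by
    rw [Matrix.sub_mulVec, dotProduct_sub, Matrix.smul_mulVec, dotProduct_smul,
      smul_eq_mul]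
    ring
  calc (Mᵀ *ᵥ y) ⬝ᵥ (Mᵀ *ᵥ y) = z ⬝ᵥ ((A_f * A_fᵀ) *ᵥ z) := by
        rw [hMy]; exact dot_self_mulVec A_f z
    _ = z ⬝ᵥ ((A_f * A_fᵀ - τ • (A_c * A_cᵀ)) *ᵥ z) + τ * (z ⬝ᵥ ((A_c * A_cᵀ) *ᵥ z)) := hsplit
    _ ≤ ε * (z ⬝ᵥ z) + τ * ((A_cᵀ *ᵥ z) ⬝ᵥ (A_cᵀ *ᵥ z)) := by
        rw [← dot_self_mulVec A_c z]
        exact add_le_add_left hquad _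
    _ = ε * (z ⬝ᵥ z) + τ * Q := by rw [hQ]
    _ ≤ ε * (((σs (r-1))⁻¹)^2 * Q) + τ * Q :=
        add_le_add_left (mul_le_mul_of_nonneg_left hzzle hε0) _
    _ ≤ ε * (((σs (r-1))⁻¹)^2 * (y ⬝ᵥ y)) + τ * (y ⬝ᵥ y) :=
        add_le_add (mul_le_mul_of_nonneg_left
          (mul_le_mul_of_nonneg_left hQle (by positivity)) hε0)
          (mul_le_mul_of_nonneg_left hQle (le_of_lt hτ))
    _ = (τ + ε / σs (r-1)^2) * (y ⬝ᵥ y) := by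
        field_simp
        ring
end

section
/- Let A_f be an m×n real matrix, A_c an m×n_c real matrix, Ũ_r the matrix of top r left singular vectors of A_c, T_r = A_c⁺Ũ_rŨ_rᵀA_f the lifting operator, and let P_c·A_c(I_c,:) be a row interpolative decomposition approximation of A_c. Set Â_f = P_c·A_c(I_c,:)·T_r. Then ‖A_f − Â_f‖₂ ≤ ‖(I − Ũ_rŨ_rᵀ)A_f‖₂ + ‖A_c − P_c·A_c(I_c,:)‖₂ · ‖A_c⁺Ũ_rŨ_rᵀA_f‖₂. -/
open Matrix
open scoped Matrix.Norms.L2Operator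

/-!
Since the columns of `Ur` lie in the range of `A_c`, the lifting operator satisfies
`A_c T_r = Ur Urᵀ A_f`. Hence `A_f - P_c A_c(I_c,:) T_r` splits as
`(A_f - Ur Urᵀ A_f) + (A_c - P_c A_c(I_c,:)) T_r`, and the bound follows from the
triangle inequality and submultiplicativity of the spectral norm.
-/

namespace Matrix

variable {𝕜 : Type*} [RCLike 𝕜] {m n p : Type*}
  [Fintype m] [Fintype n] [DecidableEq n] [Fintype p] [DecidableEq p]

theorem l2_opNorm_sub_mul_le_of_mul_eq (A : Matrix m n 𝕜) (Q : Matrix m m 𝕜)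
    (B C : Matrix m p 𝕜) (T : Matrix p n 𝕜) (hCT : C * T = Q * A) :
    ‖A - B * T‖ ≤ ‖A - Q * A‖ + ‖C - B‖ * ‖T‖ := by
  have hsplit : A - B * T = (A - Q * A) + (C - B) * T := by
    rw [Matrix.sub_mul, hCT]; abel
  calc ‖A - B * T‖ = ‖(A - Q * A) + (C - B) * T‖ := by rw [hsplit]
    _ ≤ ‖A - Q * A‖ + ‖(C - B) * T‖ := norm_add_le _ _
    _ ≤ ‖A - Q * A‖ + ‖C - B‖ * ‖T‖ := by gcongr; exact l2_opNorm_mul _ _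

end Matrix

theorem stmt5_general {m n nc r k : ℕ}
    (A_f : Matrix (Fin m) (Fin n) ℝ) (A_c : Matrix (Fin m) (Fin nc) ℝ)
    (Ur : Matrix (Fin m) (Fin r) ℝ)
    (Apinv : Matrix (Fin nc) (Fin m) ℝ)
    (hrange : A_c * Apinv * Ur = Ur)
    (P_c : Matrix (Fin m) (Fin k) ℝ) (g : Fin k → Fin m)
    (T_r : Matrix (Fin nc) (Fin n) ℝ)
    (hT : T_r = Apinv * (Ur * Urᵀ) * A_f)
    (Ahat : Matrix (Fin m) (Fin n) ℝ)
    (hAhat : Ahat = P_c * A_c.submatrix g id * T_r) :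
    ‖A_f - Ahat‖ ≤ ‖A_f - Ur * Urᵀ * A_f‖ +
      ‖A_c - P_c * A_c.submatrix g id‖ * ‖Apinv * (Ur * Urᵀ) * A_f‖ := by
  subst hT hAhat
  have hlift : A_c * (Apinv * (Ur * Urᵀ) * A_f) = Ur * Urᵀ * A_f := by
    simp only [← Matrix.mul_assoc, hrange]
  exact l2_opNorm_sub_mul_le_of_mul_eq A_f (Ur * Urᵀ) _ A_c _ hlift

/-- SPC-ID error split: with `T_r = A_c⁺ Ur Urᵀ A_f` the lifting operator (where `Ur`
has orthonormal columns lying in the range of `A_c`, i.e. the top `r` left singular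
vectors of `A_c`, and `Apinv` is the Moore–Penrose pseudoinverse of `A_c`), and
`P_c * A_c(I_c,:)` a row interpolative decomposition of `A_c`, the approximation
`Â_f = P_c A_c(I_c,:) T_r` satisfies
`‖A_f - Â_f‖ ≤ ‖(I - UrUrᵀ)A_f‖ + ‖A_c - P_c A_c(I_c,:)‖ ‖A_c⁺UrUrᵀA_f‖`. -/
theorem stmt5 {m n nc r k : ℕ}
    (A_f : Matrix (Fin m) (Fin n) ℝ) (A_c : Matrix (Fin m) (Fin nc) ℝ)
    (Ur : Matrix (Fin m) (Fin r) ℝ) (hUr : Urᵀ * Ur = 1)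
    (Apinv : Matrix (Fin nc) (Fin m) ℝ)
    (hp1 : A_c * Apinv * A_c = A_c) (hp2 : Apinv * A_c * Apinv = Apinv)
    (hp3 : (A_c * Apinv)ᵀ = A_c * Apinv) (hp4 : (Apinv * A_c)ᵀ = Apinv * A_c)
    (hrange : A_c * Apinv * Ur = Ur)
    (P_c : Matrix (Fin m) (Fin k) ℝ) (g : Fin k → Fin m)
    (T_r : Matrix (Fin nc) (Fin n) ℝ)
    (hT : T_r = Apinv * (Ur * Urᵀ) * A_f)
    (Ahat : Matrix (Fin m) (Fin n) ℝ)
    (hAhat : Ahat = P_c * A_c.submatrix g id * T_r) :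
    ‖A_f - Ahat‖ ≤ ‖A_f - Ur * Urᵀ * A_f‖ +
      ‖A_c - P_c * A_c.submatrix g id‖ * ‖Apinv * (Ur * Urᵀ) * A_f‖ :=
  stmt5_general A_f A_c Ur Apinv hrange P_c g T_r hT Ahat hAhat
end

section
/- Let A be an m×n real matrix, let Q be an m×r matrix with orthonormal columns, and let P = QQᵀ. For any integer q ≥ 0, ‖(I − P)A‖₂ ≤ ‖(I − P)(AAᵀ)^q A‖₂^{1/(2q+1)}. -/
open Matrix
open scoped Matrix.Norms.L2Operator
open scoped MatrixOrder

namespace Stmt9Aux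

variable {a b : ℕ}


lemma dot_self_nonneg (v : Fin a → ℝ) : 0 ≤ v ⬝ᵥ v :=
  Finset.sum_nonneg fun _ _ => mul_self_nonneg _

lemma dot_sq_le (u v : Fin a → ℝ) : (u ⬝ᵥ v) ^ 2 ≤ (u ⬝ᵥ u) * (v ⬝ᵥ v) := by
  simpa [dotProduct, pow_two] using Finset.sum_mul_sq_le_sq_mul_sq Finset.univ u v

lemma shift {M : Matrix (Fin a) (Fin a) ℝ} (hM : Mᵀ = M) (u v : Fin a → ℝ) :
    (M *ᵥ u) ⬝ᵥ v = u ⬝ᵥ (M *ᵥ v) := by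
  rw [Matrix.dotProduct_mulVec]
  conv_lhs => rw [← hM, Matrix.mulVec_transpose]

lemma symm_of_psd {M : Matrix (Fin a) (Fin a) ℝ} (hM : M.PosSemidef) : Mᵀ = M := by
  rw [← Matrix.conjTranspose_eq_transpose_of_trivial]; exact hM.1

lemma psd_form_nonneg {M : Matrix (Fin a) (Fin a) ℝ} (hM : M.PosSemidef) (x : Fin a → ℝ) :
    0 ≤ x ⬝ᵥ (M *ᵥ x) := by
  simpa using hM.dotProduct_mulVec_nonneg x

lemma moment {S : Matrix (Fin a) (Fin a) ℝ} (hS : S.PosSemidef) (y : Fin a → ℝ)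
    (hy : y ⬝ᵥ y ≤ 1) (k : ℕ) (hk : 1 ≤ k) :
    (y ⬝ᵥ (S *ᵥ y)) ^ k ≤ y ⬝ᵥ (S ^ k *ᵥ y) := by
  classical
  set R := CFC.sqrt S with hRdef
  have hRps : R.PosSemidef := Matrix.nonneg_iff_posSemidef.mp (CFC.sqrt_nonneg S)
  have hRsym : Rᵀ = R := symm_of_psd hRps
  have hRRS : R * R = S := CFC.sqrt_mul_sqrt_self S (Matrix.nonneg_iff_posSemidef.mpr hS)
  have hRpowsym : ∀ j, (R ^ j)ᵀ = R ^ j := fun j => by rw [Matrix.transpose_pow, hRsym]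
  -- the moments
  set d : ℕ → ℝ := fun j => (R ^ j *ᵥ y) ⬝ᵥ (R ^ j *ᵥ y) with hd
  have key : ∀ j, y ⬝ᵥ (S ^ j *ᵥ y) = d j := by
    intro j
    have h1 : S ^ j = R ^ j * R ^ j := by
      rw [← hRRS, (Commute.refl R).mul_pow]
    rw [h1, ← Matrix.mulVec_mulVec, ← shift (hRpowsym j)]
  have dnn : ∀ j, 0 ≤ d j := fun j => dot_self_nonneg _
  have d0 : d 0 ≤ 1 := by simpa [hd] using hy
  have lc : ∀ j, d (j + 1) ^ 2 ≤ d j * d (j + 2) := by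
    intro j
    have h1 : d (j + 1) = (R ^ j *ᵥ y) ⬝ᵥ (R ^ (j + 2) *ᵥ y) := by
      have e1 : R ^ (j + 1) *ᵥ y = R *ᵥ (R ^ j *ᵥ y) := by
        rw [Matrix.mulVec_mulVec, ← pow_succ']
      have e2 : R ^ (j + 2) *ᵥ y = R *ᵥ (R ^ (j + 1) *ᵥ y) := by
        rw [Matrix.mulVec_mulVec, ← pow_succ']
      calc d (j + 1) = (R *ᵥ (R ^ j *ᵥ y)) ⬝ᵥ (R ^ (j + 1) *ᵥ y) := by rw [hd, ← e1]
        _ = (R ^ j *ᵥ y) ⬝ᵥ (R *ᵥ (R ^ (j + 1) *ᵥ y)) := shift hRsym _ _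
        _ = (R ^ j *ᵥ y) ⬝ᵥ (R ^ (j + 2) *ᵥ y) := by rw [← e2]
    calc d (j + 1) ^ 2 = ((R ^ j *ᵥ y) ⬝ᵥ (R ^ (j + 2) *ᵥ y)) ^ 2 := by rw [h1]
      _ ≤ d j * d (j + 2) := dot_sq_le _ _
  have step1 : ∀ j, d 1 * d j ≤ d (j + 1) := by
    intro j
    induction j with
    | zero =>
      have : d 1 * d 0 ≤ d 1 * 1 := mul_le_mul_of_nonneg_left d0 (dnn 1)
      simpa using this
    | succ j ih =>
      rcases (dnn (j + 1)).eq_or_lt' with h | h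
      · have : d 1 * d (j + 1) = 0 := by rw [h, mul_zero]
        rw [this]; exact dnn _
      · have hmul : (d 1 * d (j + 1)) * d (j + 1) ≤ d (j + 2) * d (j + 1) := by
          calc (d 1 * d (j + 1)) * d (j + 1) = d 1 * d (j + 1) ^ 2 := by ring
            _ ≤ d 1 * (d j * d (j + 2)) :=
                mul_le_mul_of_nonneg_left (lc j) (dnn 1)
            _ = (d 1 * d j) * d (j + 2) := by ring
            _ ≤ d (j + 1) * d (j + 2) := mul_le_mul_of_nonneg_right ih (dnn _)
            _ = d (j + 2) * d (j + 1) := mul_comm _ _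
        exact le_of_mul_le_mul_right hmul h
  have step2 : ∀ j, d 1 ^ (j + 1) ≤ d (j + 1) := by
    intro j
    induction j with
    | zero => simp
    | succ j ih =>
      calc d 1 ^ (j + 2) = d 1 * d 1 ^ (j + 1) := by ring
        _ ≤ d 1 * d (j + 1) := mul_le_mul_of_nonneg_left ih (dnn 1)
        _ ≤ d (j + 2) := step1 _
  obtain ⟨j, rfl⟩ : ∃ j, k = j + 1 := ⟨k - 1, (Nat.succ_pred_eq_of_pos hk).symm⟩
  have hS1 : y ⬝ᵥ (S *ᵥ y) = d 1 := by simpa using key 1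
  rw [hS1, key (j + 1)]
  exact step2 j



lemma enorm (v : Fin a → ℝ) :
    ‖(WithLp.equiv 2 (Fin a → ℝ)).symm v‖ ^ 2 = v ⬝ᵥ v := by
  rw [EuclideanSpace.norm_eq, Real.sq_sqrt]
  · simp [dotProduct, sq_abs, pow_two]
  · exact Finset.sum_nonneg fun _ _ => sq_nonneg _

lemma mulVec_bound (M : Matrix (Fin a) (Fin b) ℝ) (x : Fin b → ℝ) :
    (M *ᵥ x) ⬝ᵥ (M *ᵥ x) ≤ ‖M‖ ^ 2 * (x ⬝ᵥ x) := by
  have h := Matrix.l2_opNorm_mulVec M ((WithLp.equiv 2 (Fin b → ℝ)).symm x)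
  have e : M *ᵥ ((WithLp.equiv 2 (Fin b → ℝ)).symm x) = M *ᵥ x := rfl
  have e2 : ((EuclideanSpace.equiv (Fin a) ℝ).symm (M *ᵥ x) : EuclideanSpace ℝ (Fin a)) =
      (WithLp.equiv 2 (Fin a → ℝ)).symm (M *ᵥ x) := rfl
  rw [e, e2] at h
  have h2 := pow_le_pow_left₀ (norm_nonneg _) h 2
  rw [enorm, mul_pow, enorm] at h2
  exact h2

lemma dot_mulVec_le_norm (M : Matrix (Fin a) (Fin a) ℝ) (x : Fin a → ℝ) (hx : x ⬝ᵥ x ≤ 1) :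
    x ⬝ᵥ (M *ᵥ x) ≤ ‖M‖ := by
  have h1 : (x ⬝ᵥ (M *ᵥ x)) ^ 2 ≤ (x ⬝ᵥ x) * ((M *ᵥ x) ⬝ᵥ (M *ᵥ x)) := by
    simpa [dotProduct, pow_two] using Finset.sum_mul_sq_le_sq_mul_sq Finset.univ x (M *ᵥ x)
  have h2 := mulVec_bound M x
  have hxx : 0 ≤ x ⬝ᵥ x := Finset.sum_nonneg fun _ _ => mul_self_nonneg _
  have hN : (0:ℝ) ≤ ‖M‖ := norm_nonneg _
  have hss : (x ⬝ᵥ x) * (x ⬝ᵥ x) ≤ 1 := by nlinarith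
  have : (x ⬝ᵥ (M *ᵥ x)) ^ 2 ≤ ‖M‖ ^ 2 := by
    nlinarith [mul_le_mul_of_nonneg_left h2 hxx, sq_nonneg ‖M‖]
  exact le_of_pow_le_pow_left₀ two_ne_zero hN this

lemma opNorm_le (M : Matrix (Fin a) (Fin b) ℝ) {C : ℝ} (hC : 0 ≤ C)
    (h : ∀ x : Fin b → ℝ, (M *ᵥ x) ⬝ᵥ (M *ᵥ x) ≤ C ^ 2 * (x ⬝ᵥ x)) : ‖M‖ ≤ C := by
  rw [Matrix.l2_opNorm_def]
  refine ContinuousLinearMap.opNorm_le_bound _ hC fun x => ?_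
  set x' : Fin b → ℝ := (WithLp.equiv 2 (Fin b → ℝ)) x with hx'
  have hxx : x = (WithLp.equiv 2 (Fin b → ℝ)).symm x' := rfl
  have hval : (Matrix.toEuclideanLin.trans LinearMap.toContinuousLinearMap M) x =
      (WithLp.equiv 2 (Fin a → ℝ)).symm (M *ᵥ x') := rfl
  rw [hval]
  have hnn : (0:ℝ) ≤ C * ‖x‖ := mul_nonneg hC (norm_nonneg _)
  refine le_of_pow_le_pow_left₀ two_ne_zero hnn ?_
  rw [enorm, mul_pow]
  calc (M *ᵥ x') ⬝ᵥ (M *ᵥ x') ≤ C ^ 2 * (x' ⬝ᵥ x') := h x'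
    _ = C ^ 2 * ‖x‖ ^ 2 := by rw [hxx, enorm]

lemma norm_mul_transpose (M : Matrix (Fin a) (Fin b) ℝ) :
    ‖M * Mᵀ‖ = ‖M‖ ^ 2 := by
  have h3 : (Mᵀ)ᴴ = M := by
    rw [Matrix.conjTranspose_eq_transpose_of_trivial, Matrix.transpose_transpose]
  calc ‖M * Mᵀ‖ = ‖(Mᵀ)ᴴ * Mᵀ‖ := by rw [h3]
    _ = ‖Mᵀ‖ * ‖Mᵀ‖ := Matrix.l2_opNorm_conjTranspose_mul_self _
    _ = ‖M‖ * ‖M‖ := by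
        rw [← Matrix.conjTranspose_eq_transpose_of_trivial, Matrix.l2_opNorm_conjTranspose]
    _ = ‖M‖ ^ 2 := (pow_two _).symm



lemma psd_cs {T : Matrix (Fin a) (Fin a) ℝ} (hT : T.PosSemidef) (u v : Fin a → ℝ) :
    (u ⬝ᵥ (T *ᵥ v)) ^ 2 ≤ (u ⬝ᵥ (T *ᵥ u)) * (v ⬝ᵥ (T *ᵥ v)) := by
  classical
  have hR : CFC.sqrt T * CFC.sqrt T = T := CFC.sqrt_mul_sqrt_self T (Matrix.nonneg_iff_posSemidef.mpr hT)
  have hRs : (CFC.sqrt T)ᵀ = CFC.sqrt T := symm_of_psd (Matrix.nonneg_iff_posSemidef.mp (CFC.sqrt_nonneg T))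
  have e : ∀ w₁ w₂ : Fin a → ℝ, w₁ ⬝ᵥ (T *ᵥ w₂) = (CFC.sqrt T *ᵥ w₁) ⬝ᵥ (CFC.sqrt T *ᵥ w₂) := by
    intro w₁ w₂
    conv_lhs => rw [← hR]
    rw [← Matrix.mulVec_mulVec, shift hRs]
  rw [e u v, e u u, e v v]
  exact dot_sq_le _ _

lemma psd_form_le {T : Matrix (Fin a) (Fin a) ℝ} (hT : T.PosSemidef) {C : ℝ} (hC : 0 ≤ C)
    (h : ∀ x : Fin a → ℝ, x ⬝ᵥ x ≤ 1 → x ⬝ᵥ (T *ᵥ x) ≤ C) :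
    ∀ x : Fin a → ℝ, x ⬝ᵥ (T *ᵥ x) ≤ C * (x ⬝ᵥ x) := by
  intro x
  rcases (dot_self_nonneg x).eq_or_lt' with hs | hs
  · -- x ⬝ᵥ x = 0, so x = 0
    have hx0 : (WithLp.equiv 2 (Fin a → ℝ)).symm x = 0 := by
      rw [← norm_eq_zero]
      have h2 : ‖(WithLp.equiv 2 (Fin a → ℝ)).symm x‖ ^ 2 = 0 := by rw [enorm, ← hs]
      exact pow_eq_zero_iff two_ne_zero |>.mp h2
    have hx : x = 0 := congrArg (WithLp.equiv 2 (Fin a → ℝ)) hx0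
    simp [hx]
  · set s := x ⬝ᵥ x with hsdef
    set c : ℝ := (Real.sqrt s)⁻¹ with hcdef
    have hsqrt : Real.sqrt s > 0 := Real.sqrt_pos.mpr hs
    have hc2 : c ^ 2 = s⁻¹ := by
      rw [hcdef, inv_pow, Real.sq_sqrt hs.le]
    have hyy : (c • x) ⬝ᵥ (c • x) = c ^ 2 * s := by
      rw [smul_dotProduct, dotProduct_smul, smul_eq_mul, smul_eq_mul, ← hsdef]
      ring
    have hy1 : (c • x) ⬝ᵥ (c • x) ≤ 1 := by
      rw [hyy, hc2, inv_mul_cancel₀ hs.ne']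
    have hTy : (c • x) ⬝ᵥ (T *ᵥ (c • x)) = c ^ 2 * (x ⬝ᵥ (T *ᵥ x)) := by
      rw [Matrix.mulVec_smul, smul_dotProduct, dotProduct_smul,
        smul_eq_mul, smul_eq_mul]
      ring
    have hb := h (c • x) hy1
    rw [hTy, hc2] at hb
    have : s⁻¹ * (x ⬝ᵥ (T *ᵥ x)) * s ≤ C * s :=
      mul_le_mul_of_nonneg_right hb hs.le
    calc x ⬝ᵥ (T *ᵥ x) = s⁻¹ * (x ⬝ᵥ (T *ᵥ x)) * s := by
          field_simp
    _ ≤ C * s := this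

lemma psd_norm_le {T : Matrix (Fin a) (Fin a) ℝ} (hT : T.PosSemidef) {C : ℝ} (hC : 0 ≤ C)
    (h : ∀ x : Fin a → ℝ, x ⬝ᵥ x ≤ 1 → x ⬝ᵥ (T *ᵥ x) ≤ C) : ‖T‖ ≤ C := by
  have h' := psd_form_le hT hC h
  refine opNorm_le T hC fun x => ?_
  set z := T *ᵥ x with hz
  have h1 : z ⬝ᵥ z = x ⬝ᵥ (T *ᵥ z) := shift (symm_of_psd hT) x z
  have h2 : (x ⬝ᵥ (T *ᵥ z)) ^ 2 ≤ (x ⬝ᵥ (T *ᵥ x)) * (z ⬝ᵥ (T *ᵥ z)) := psd_cs hT x z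
  have h3 : (x ⬝ᵥ (T *ᵥ x)) * (z ⬝ᵥ (T *ᵥ z)) ≤ (C * (x ⬝ᵥ x)) * (C * (z ⬝ᵥ z)) :=
    mul_le_mul (h' x) (h' z) (psd_form_nonneg hT z)
      (mul_nonneg hC (dot_self_nonneg x))
  rcases (dot_self_nonneg z).eq_or_lt' with hz0 | hz0
  · rw [hz0]
    exact mul_nonneg (by positivity) (dot_self_nonneg x)
  · have h4 : (z ⬝ᵥ z) * (z ⬝ᵥ z) ≤ (C ^ 2 * (x ⬝ᵥ x)) * (z ⬝ᵥ z) := by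
      calc (z ⬝ᵥ z) * (z ⬝ᵥ z) = (z ⬝ᵥ z) ^ 2 := (pow_two _).symm
        _ = (x ⬝ᵥ (T *ᵥ z)) ^ 2 := by rw [h1]
        _ ≤ (C * (x ⬝ᵥ x)) * (C * (z ⬝ᵥ z)) := le_trans h2 h3
        _ = (C ^ 2 * (x ⬝ᵥ x)) * (z ⬝ᵥ z) := by ring
    exact le_of_mul_le_mul_right h4 hz0



lemma proj_contract {Pi : Matrix (Fin a) (Fin a) ℝ} (hPt : Piᵀ = Pi) (hPi : Pi * Pi = Pi)
    (x : Fin a → ℝ) : (Pi *ᵥ x) ⬝ᵥ (Pi *ᵥ x) ≤ x ⬝ᵥ x := by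
  have h1 : (Pi *ᵥ x) ⬝ᵥ (Pi *ᵥ x) = x ⬝ᵥ (Pi *ᵥ x) := by
    rw [shift hPt, Matrix.mulVec_mulVec, hPi]
  set N : Matrix (Fin a) (Fin a) ℝ := 1 - Pi with hN
  have hNt : Nᵀ = N := by rw [hN, Matrix.transpose_sub, Matrix.transpose_one, hPt]
  have hNN : N * N = N := by
    rw [hN, Matrix.mul_sub, Matrix.sub_mul, Matrix.sub_mul, Matrix.one_mul, Matrix.mul_one,
      hPi]
    simp only [Matrix.one_mul]
    abel
  have h2 : (N *ᵥ x) ⬝ᵥ (N *ᵥ x) = x ⬝ᵥ (N *ᵥ x) := by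
    rw [shift hNt, Matrix.mulVec_mulVec, hNN]
  have h3 : x ⬝ᵥ (N *ᵥ x) = x ⬝ᵥ x - x ⬝ᵥ (Pi *ᵥ x) := by
    rw [hN, Matrix.sub_mulVec, dotProduct_sub, Matrix.one_mulVec]
  have h4 : 0 ≤ x ⬝ᵥ (N *ᵥ x) := h2 ▸ dot_self_nonneg _
  rw [h1]
  linarith [h3 ▸ h4]

lemma key_ineq {Pi S : Matrix (Fin a) (Fin a) ℝ} (hPt : Piᵀ = Pi) (hPi : Pi * Pi = Pi)
    (hS : S.PosSemidef) (k : ℕ) (hk : 1 ≤ k) :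
    ‖Pi * S * Pi‖ ^ k ≤ ‖Pi * S ^ k * Pi‖ := by
  classical
  have hk0 : (k : ℝ) ≠ 0 := Nat.cast_ne_zero.mpr (by omega)
  have hPh : Piᴴ = Pi := by
    rw [Matrix.conjTranspose_eq_transpose_of_trivial, hPt]
  have hT : (Pi * S * Pi).PosSemidef := by
    have := hS.mul_mul_conjTranspose_same Pi
    rwa [hPh] at this
  set D := ‖Pi * S ^ k * Pi‖ with hD
  have hD0 : 0 ≤ D := norm_nonneg _
  set C : ℝ := D ^ ((k : ℝ)⁻¹) with hC
  have hC0 : 0 ≤ C := Real.rpow_nonneg hD0 _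
  have hCk : C ^ k = D := by
    rw [hC, ← Real.rpow_natCast (D ^ ((k : ℝ)⁻¹)) k, ← Real.rpow_mul hD0,
      inv_mul_cancel₀ hk0, Real.rpow_one]
  have hbound : ∀ x : Fin a → ℝ, x ⬝ᵥ x ≤ 1 → x ⬝ᵥ ((Pi * S * Pi) *ᵥ x) ≤ C := by
    intro x hx
    set y := Pi *ᵥ x with hy
    have hform : ∀ M : Matrix (Fin a) (Fin a) ℝ,
        x ⬝ᵥ ((Pi * M * Pi) *ᵥ x) = y ⬝ᵥ (M *ᵥ y) := by
      intro M
      rw [← Matrix.mulVec_mulVec, ← Matrix.mulVec_mulVec, ← shift hPt, hy]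
    have hy1 : y ⬝ᵥ y ≤ 1 := le_trans (proj_contract hPt hPi x) hx
    have h1 : (y ⬝ᵥ (S *ᵥ y)) ^ k ≤ y ⬝ᵥ (S ^ k *ᵥ y) := moment hS y hy1 k hk
    have h2 : y ⬝ᵥ (S ^ k *ᵥ y) ≤ D := by
      rw [← hform (S ^ k)]
      exact dot_mulVec_le_norm _ x hx
    have h3 : (x ⬝ᵥ ((Pi * S * Pi) *ᵥ x)) ^ k ≤ C ^ k := by
      rw [hform S, hCk]
      exact le_trans h1 h2
    exact le_of_pow_le_pow_left₀ (by omega) hC0 h3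
  have := psd_norm_le hT hC0 hbound
  calc ‖Pi * S * Pi‖ ^ k ≤ C ^ k := pow_le_pow_left₀ (norm_nonneg _) this k
    _ = D := hCk

end Stmt9Aux

open Stmt9Aux

/-- Power-iteration inequality: for `Q` with orthonormal columns, `P = QQᵀ`, and any `q ≥ 0`,
`‖(I - P)A‖ ≤ ‖(I - P)(AAᵀ)^q A‖^{1/(2q+1)}`. -/
theorem stmt9 {m n r : ℕ}
    (A : Matrix (Fin m) (Fin n) ℝ) (Q : Matrix (Fin m) (Fin r) ℝ)
    (hQ : Qᵀ * Q = 1) (P : Matrix (Fin m) (Fin m) ℝ) (hP : P = Q * Qᵀ) (q : ℕ) :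
    ‖(1 - P) * A‖ ≤ ‖(1 - P) * ((A * Aᵀ) ^ q * A)‖ ^ ((1 : ℝ) / (2 * (q : ℝ) + 1)) := by
  classical
  set Pi : Matrix (Fin m) (Fin m) ℝ := 1 - P with hPidef
  set S : Matrix (Fin m) (Fin m) ℝ := A * Aᵀ with hSdef
  have hPt : Piᵀ = Pi := by
    rw [hPidef, Matrix.transpose_sub, Matrix.transpose_one, hP, Matrix.transpose_mul,
      Matrix.transpose_transpose]
  have hPP : P * P = P := by
    rw [hP, Matrix.mul_assoc, ← Matrix.mul_assoc Qᵀ Q Qᵀ, hQ, Matrix.one_mul]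
  have hPi : Pi * Pi = Pi := by
    rw [hPidef, Matrix.mul_sub, Matrix.sub_mul, Matrix.sub_mul, Matrix.one_mul, Matrix.mul_one,
      hPP]
    simp only [Matrix.one_mul]
    abel
  have hS : S.PosSemidef := by
    have h := Matrix.posSemidef_self_mul_conjTranspose A
    rwa [Matrix.conjTranspose_eq_transpose_of_trivial] at h
  have hSt : Sᵀ = S := symm_of_psd hS
  set k : ℕ := 2 * q + 1 with hkdef
  -- first squared-norm identity
  have e1 : ‖Pi * A‖ ^ 2 = ‖Pi * S * Pi‖ := by
    rw [← norm_mul_transpose (Pi * A)]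
    congr 1
    rw [Matrix.transpose_mul, hPt, hSdef]
    simp only [Matrix.mul_assoc]
  -- second squared-norm identity
  have e2 : ‖Pi * (S ^ q * A)‖ ^ 2 = ‖Pi * S ^ k * Pi‖ := by
    rw [← norm_mul_transpose (Pi * (S ^ q * A))]
    congr 1
    rw [Matrix.transpose_mul, Matrix.transpose_mul, Matrix.transpose_pow, hSt, hPt]
    have hpow : S ^ q * (A * (Aᵀ * (S ^ q * Pi))) = S ^ k * Pi := by
      have h1 : A * (Aᵀ * (S ^ q * Pi)) = S * (S ^ q * Pi) := by
        rw [hSdef]; simp only [Matrix.mul_assoc]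
      rw [h1, ← Matrix.mul_assoc, ← Matrix.mul_assoc, ← pow_succ, ← pow_add, hkdef]
      congr 2
      omega
    simp only [Matrix.mul_assoc]
    rw [hpow]
  have hkey : ‖Pi * S * Pi‖ ^ k ≤ ‖Pi * S ^ k * Pi‖ := key_ineq hPt hPi hS k (by omega)
  have ha0 : (0 : ℝ) ≤ ‖Pi * A‖ := norm_nonneg _
  have hb0 : (0 : ℝ) ≤ ‖Pi * (S ^ q * A)‖ := norm_nonneg _
  have hak : ‖Pi * A‖ ^ k ≤ ‖Pi * (S ^ q * A)‖ := by
    refine le_of_pow_le_pow_left₀ two_ne_zero hb0 ?_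
    calc (‖Pi * A‖ ^ k) ^ 2 = (‖Pi * A‖ ^ 2) ^ k := by ring
      _ = ‖Pi * S * Pi‖ ^ k := by rw [e1]
      _ ≤ ‖Pi * S ^ k * Pi‖ := hkey
      _ = ‖Pi * (S ^ q * A)‖ ^ 2 := e2.symm
  -- now take k-th roots
  have hkpos : (0 : ℝ) < 2 * (q : ℝ) + 1 := by positivity
  have hcast : ((k : ℕ) : ℝ) = 2 * (q : ℝ) + 1 := by rw [hkdef]; push_cast; ring
  calc ‖Pi * A‖ = (‖Pi * A‖ ^ k) ^ ((1 : ℝ) / (2 * (q : ℝ) + 1)) := by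
        rw [← Real.rpow_natCast (‖Pi * A‖) k, ← Real.rpow_mul ha0, hcast,
          mul_one_div, div_self hkpos.ne', Real.rpow_one]
    _ ≤ ‖Pi * (S ^ q * A)‖ ^ ((1 : ℝ) / (2 * (q : ℝ) + 1)) := by
        apply Real.rpow_le_rpow (pow_nonneg ha0 _) hak
        positivity
end

section
/- Let A be an m×n real matrix of rank at least k, with rank-k column-pivoted QR factorization of Aᵀ given by AᵀZ = QR where Z is an m×m permutation matrix, Q is n×k with orthonormal columns, and R = [R₁ | R₂] with R₁ ∈ ℝ^{k×k} invertible and R₂ ∈ ℝ^{k×(m−k)}. If R₂ = R₁C exactly for some C ∈ ℝ^{k×(m−k)}, then A = P·A(I,:) where A(I,:) consists of k rows of A indexed by the pivoting, and P = Z[I_k | C]ᵀ satisfies P(I,:) = I_k (the k×k identity). -/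
open Matrix

/-!
Transposing `AᵀZ = Q R₁ [I_k | C]` and undoing the permutation says that the rows of `A`, listed in
pivot order, are `[I_k | C]ᵀ G` for `G = (Q R₁)ᵀ`. The first `k` of them, i.e. the pivot rows
`A(I,:)`, are therefore `G` itself, so every row of `A` is the corresponding row of `[I_k | C]ᵀ`
applied to `A(I,:)`.
-/

namespace Matrix

variable {m n k l α : Type*} [DecidableEq k]

section Semiring

variable [Semiring α]

theorem eq_submatrix_fromRows_one_mul_of_submatrix_eq [Fintype k] [Fintype n] {A : Matrix m n α}
    (σ : k ⊕ l ≃ m) {D : Matrix l k α} {G : Matrix k n α}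
    (h : A.submatrix σ id = fromRows 1 D * G) :
    A = (fromRows 1 D).submatrix σ.symm id * A.submatrix (σ ∘ Sum.inl) id := by
  have hG : A.submatrix (σ ∘ Sum.inl) id = G := by
    change (A.submatrix σ id).toRows₁ = G
    rw [h, fromRows_mul, toRows₁_fromRows, Matrix.one_mul]
  calc A = (A.submatrix σ id).submatrix σ.symm id := by simp
    _ = (fromRows 1 D).submatrix σ.symm id * G := by
      rw [h, submatrix_mul _ _ _ _ _ Function.bijective_id, submatrix_id_id]
    _ = _ := by rw [hG]

theorem submatrix_fromRows_one_submatrix_inl (σ : k ⊕ l ≃ m) (D : Matrix l k α) :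
    ((fromRows 1 D).submatrix σ.symm id).submatrix (σ ∘ Sum.inl) id = 1 := by
  rw [submatrix_submatrix, Function.comp_id, ← Function.comp_assoc, Equiv.symm_comp_self,
    Function.id_comp]
  exact toRows₁_fromRows 1 D

end Semiring

variable [CommSemiring α] [Fintype m] [DecidableEq m]

theorem permMatrix_mul_transpose_fromCols_one (e : Equiv.Perm m) (τ : k ⊕ l ≃ m)
    (C : Matrix k l α) :
    e.permMatrix α * ((fromCols 1 C).submatrix id τ.symm)ᵀ =
      (fromRows 1 Cᵀ).submatrix (τ.trans e.symm).symm id := by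
  rw [PEquiv.toMatrix_toPEquiv_mul, transpose_submatrix, transpose_fromCols, transpose_one,
    submatrix_submatrix]
  rfl

theorem submatrix_eq_fromRows_one_mul_of_transpose_mul_permMatrix_eq [Fintype k] [Fintype n]
    {A : Matrix m n α} (e : Equiv.Perm m) (τ : k ⊕ l ≃ m) {Q : Matrix n k α}
    {R₁ : Matrix k k α} {C : Matrix k l α}
    (h : Aᵀ * e.permMatrix α = Q * (fromCols R₁ (R₁ * C)).submatrix id τ.symm) :
    A.submatrix (τ.trans e.symm) id = fromRows 1 Cᵀ * (Q * R₁)ᵀ := by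
  have hcols : Aᵀ.submatrix id (τ.trans e.symm) = Q * R₁ * fromCols 1 C := by
    calc Aᵀ.submatrix id (τ.trans e.symm) = (Aᵀ * e.permMatrix α).submatrix id τ := by
          rw [PEquiv.mul_toMatrix_toPEquiv, submatrix_submatrix]; rfl
      _ = Q * fromCols R₁ (R₁ * C) := by
          rw [h, submatrix_mul _ _ _ _ _ Function.bijective_id, submatrix_submatrix]; simp
      _ = Q * R₁ * fromCols 1 C := by rw [Matrix.mul_assoc, mul_fromCols R₁, Matrix.mul_one]
  calc A.submatrix (τ.trans e.symm) id = (Aᵀ.submatrix id (τ.trans e.symm))ᵀ := rfl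
    _ = fromRows 1 Cᵀ * (Q * R₁)ᵀ := by
      rw [hcols, transpose_mul, transpose_fromCols, transpose_one]

end Matrix

theorem stmt11_general {k l n : ℕ}
    (A : Matrix (Fin (k + l)) (Fin n) ℝ)
    (e : Equiv.Perm (Fin (k + l))) (Z : Matrix (Fin (k + l)) (Fin (k + l)) ℝ)
    (hZ : Z = e.permMatrix ℝ)
    (Q : Matrix (Fin n) (Fin k) ℝ)
    (R₁ : Matrix (Fin k) (Fin k) ℝ)
    (R₂ : Matrix (Fin k) (Fin l) ℝ)
    (hQR : Aᵀ * Z = Q * ((Matrix.fromCols R₁ R₂).submatrix id finSumFinEquiv.symm))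
    (C : Matrix (Fin k) (Fin l) ℝ) (hC : R₂ = R₁ * C)
    (g : Fin k → Fin (k + l))
    (hg : g = fun t => e.symm (finSumFinEquiv (Sum.inl t)))
    (P : Matrix (Fin (k + l)) (Fin k) ℝ)
    (hP : P = Z * ((Matrix.fromCols (1 : Matrix (Fin k) (Fin k) ℝ) C).submatrix id
      finSumFinEquiv.symm)ᵀ) :
    A = P * A.submatrix g id ∧ P.submatrix g id = 1 := by
  set σ := finSumFinEquiv.trans e.symm
  have hA : A.submatrix σ id = fromRows 1 Cᵀ * (Q * R₁)ᵀ := by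
    subst hZ hC
    exact submatrix_eq_fromRows_one_mul_of_transpose_mul_permMatrix_eq e _ hQR
  have hgσ : g = σ ∘ Sum.inl := hg
  rw [hP, hZ, permMatrix_mul_transpose_fromCols_one, hgσ]
  exact ⟨eq_submatrix_fromRows_one_mul_of_submatrix_eq σ hA,
    submatrix_fromRows_one_submatrix_inl σ Cᵀ⟩

/-- Exact row interpolative decomposition from a rank-`k` column-pivoted QR of `Aᵀ`:
with `AᵀZ = Q[R₁ | R₂]`, `Z` the permutation matrix of `e`, `Q` orthonormal columns,
`R₁` invertible, and `R₂ = R₁C`, the matrix `A` (with `m = k + l` rows, rank ≥ k)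
satisfies `A = P · A(I,:)` where `I` is the set of pivot rows
(`g t = e⁻¹(embed(inl t))`), `P = Z [I_k | C]ᵀ`, and `P(I,:) = I_k`. -/
theorem stmt11 {k l n : ℕ}
    (A : Matrix (Fin (k + l)) (Fin n) ℝ)
    (hrank : k ≤ A.rank)
    (e : Equiv.Perm (Fin (k + l))) (Z : Matrix (Fin (k + l)) (Fin (k + l)) ℝ)
    (hZ : Z = e.permMatrix ℝ)
    (Q : Matrix (Fin n) (Fin k) ℝ) (hQ : Qᵀ * Q = 1)
    (R₁ : Matrix (Fin k) (Fin k) ℝ) (hR₁ : IsUnit R₁)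
    (R₂ : Matrix (Fin k) (Fin l) ℝ)
    (hQR : Aᵀ * Z = Q * ((Matrix.fromCols R₁ R₂).submatrix id finSumFinEquiv.symm))
    (C : Matrix (Fin k) (Fin l) ℝ) (hC : R₂ = R₁ * C)
    (g : Fin k → Fin (k + l))
    (hg : g = fun t => e.symm (finSumFinEquiv (Sum.inl t)))
    (P : Matrix (Fin (k + l)) (Fin k) ℝ)
    (hP : P = Z * ((Matrix.fromCols (1 : Matrix (Fin k) (Fin k) ℝ) C).submatrix id
      finSumFinEquiv.symm)ᵀ) :
    A = P * A.submatrix g id ∧ P.submatrix g id = 1 :=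
  stmt11_general A e Z hZ Q R₁ R₂ hQR C hC g hg P hP
end

section
/- Let A_f be an m×n real matrix, A_c an m×n_c matrix, and suppose there exist matrices M (n_c×n) and E_I (m×n) with A_f = A_cM + E_I. Let Q_c R_c be a QR decomposition of A_c with Q_c having orthonormal columns, and let Â_f be a best rank-k spectral-norm approximation of Q_cQ_cᵀA_f. Then ‖A_f − Â_f‖₂ ≤ σ_{f,k+1} + ‖E_I‖₂, where σ_{f,k+1} is the (k+1)-th largest singular value of A_f. -/
open Matrix
open scoped Matrix.Norms.L2Operator

/-!
Write `P = Q_cQ_cᵀ`, an orthogonal projection fixing the columns of `A_c`, and split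
`A_f - Â_f = (A_f - PA_f) + (PA_f - Â_f)`. The first term is `(1 - P)E_I`. For every `X` of rank
at most `k`, `PX` also has rank at most `k`, so optimality of `Â_f` bounds the second term by
`‖P(A_f - X)‖ ≤ ‖A_f - X‖`; taking the infimum over `X` gives `σ_{f,k+1}`.
-/

namespace Matrix

section Isometry

variable {α : Type*} [CommSemiring α] [StarRing α] {m r : Type*} [Fintype m] [Fintype r]
  [DecidableEq r] {Q : Matrix m r α}

theorem mul_conjTranspose_mul_self_mul (hQ : Qᴴ * Q = 1) {n : Type*} (B : Matrix r n α) :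
    Q * Qᴴ * (Q * B) = Q * B := by
  rw [Matrix.mul_assoc, ← Matrix.mul_assoc Qᴴ, hQ, Matrix.one_mul]

theorem isStarProjection_mul_conjTranspose (hQ : Qᴴ * Q = 1) :
    IsStarProjection (Q * Qᴴ) where
  isIdempotentElem := mul_conjTranspose_mul_self_mul hQ Qᴴ
  isSelfAdjoint := by
    rw [IsSelfAdjoint, star_eq_conjTranspose, conjTranspose_mul, conjTranspose_conjTranspose]

end Isometry

theorem _root_.IsStarProjection.l2_opNorm_mul_le {𝕜 : Type*} [RCLike 𝕜] {m n : Type*}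
    [Fintype m] [Fintype n] [DecidableEq m] [DecidableEq n] {P : Matrix m m 𝕜}
    (hP : IsStarProjection P) (A : Matrix m n 𝕜) : ‖P * A‖ ≤ ‖A‖ :=
  (l2_opNorm_mul P A).trans <| mul_le_of_le_one_left (norm_nonneg A) (hP.norm_le P)

theorem le_sInf_l2_opNorm_sub_add {𝕜 : Type*} [RCLike 𝕜] {m n : Type*} [Fintype m] [Fintype n]
    [DecidableEq n] {A : Matrix m n 𝕜} {k : ℕ} {a c : ℝ}
    (h : ∀ X : Matrix m n 𝕜, X.rank ≤ k → a ≤ ‖A - X‖ + c) :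
    a ≤ sInf {d : ℝ | ∃ X : Matrix m n 𝕜, X.rank ≤ k ∧ ‖A - X‖ = d} + c := by
  rw [← sub_le_iff_le_add]
  refine le_csInf ⟨_, 0, by simp, rfl⟩ ?_
  rintro d ⟨X, hX, rfl⟩
  linarith [h X hX]

end Matrix

theorem stmt17_general {m n nc r k : ℕ}
    (A_f : Matrix (Fin m) (Fin n) ℝ) (A_c : Matrix (Fin m) (Fin nc) ℝ)
    (M : Matrix (Fin nc) (Fin n) ℝ) (E_I : Matrix (Fin m) (Fin n) ℝ)
    (hAf : A_f = A_c * M + E_I)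
    (Q_c : Matrix (Fin m) (Fin r) ℝ) (R_c : Matrix (Fin r) (Fin nc) ℝ)
    (hQ : Q_cᵀ * Q_c = 1) (hQR : A_c = Q_c * R_c)
    (Ahat : Matrix (Fin m) (Fin n) ℝ)
    (hbest : ∀ X : Matrix (Fin m) (Fin n) ℝ, X.rank ≤ k →
      ‖Q_c * Q_cᵀ * A_f - Ahat‖ ≤ ‖Q_c * Q_cᵀ * A_f - X‖)
    (σ : ℝ)
    (hσ : σ = sInf {c : ℝ | ∃ X : Matrix (Fin m) (Fin n) ℝ, X.rank ≤ k ∧ ‖A_f - X‖ = c}) :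
    ‖A_f - Ahat‖ ≤ σ + ‖E_I‖ := by
  rw [← conjTranspose_eq_transpose_of_trivial] at hQ hbest
  set P := Q_c * Q_cᴴ
  have hP : IsStarProjection P := isStarProjection_mul_conjTranspose hQ
  have hresidual : ‖A_f - P * A_f‖ ≤ ‖E_I‖ := by
    have hAc : P * A_c = A_c := by rw [hQR, mul_conjTranspose_mul_self_mul hQ]
    calc ‖A_f - P * A_f‖ = ‖(1 - P) * E_I‖ := by
          rw [hAf, Matrix.sub_mul, Matrix.one_mul, Matrix.mul_add, ← Matrix.mul_assoc, hAc]
          abel_nf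
      _ ≤ ‖E_I‖ := hP.one_sub.l2_opNorm_mul_le E_I
  have hprojected (X : Matrix (Fin m) (Fin n) ℝ) (hX : X.rank ≤ k) :
      ‖P * A_f - Ahat‖ ≤ ‖A_f - X‖ :=
    calc ‖P * A_f - Ahat‖ ≤ ‖P * A_f - P * X‖ :=
          hbest _ ((rank_mul_le_right _ _).trans hX)
      _ = ‖P * (A_f - X)‖ := by rw [Matrix.mul_sub]
      _ ≤ ‖A_f - X‖ := hP.l2_opNorm_mul_le _
  rw [hσ]
  refine le_sInf_l2_opNorm_sub_add fun X hX => ?_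
  calc ‖A_f - Ahat‖ ≤ ‖A_f - P * A_f‖ + ‖P * A_f - Ahat‖ :=
        norm_sub_le_norm_sub_add_norm_sub _ _ _
    _ ≤ ‖E_I‖ + ‖A_f - X‖ := add_le_add hresidual (hprojected X hX)
    _ = ‖A_f - X‖ + ‖E_I‖ := add_comm _ _

/-- SPC-SVD error bound: if `A_f = A_c M + E_I`, `A_c = Q_c R_c` with `Q_c` having
orthonormal columns, and `Â_f` is a best rank-`k` spectral-norm approximation of
`Q_cQ_cᵀA_f`, then `‖A_f - Â_f‖ ≤ σ_{f,k+1} + ‖E_I‖`, where `σ_{f,k+1}` is the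
spectral-norm distance of `A_f` to the rank-`k` matrices (Eckart–Young). -/
theorem stmt17 {m n nc r k : ℕ}
    (A_f : Matrix (Fin m) (Fin n) ℝ) (A_c : Matrix (Fin m) (Fin nc) ℝ)
    (M : Matrix (Fin nc) (Fin n) ℝ) (E_I : Matrix (Fin m) (Fin n) ℝ)
    (hAf : A_f = A_c * M + E_I)
    (Q_c : Matrix (Fin m) (Fin r) ℝ) (R_c : Matrix (Fin r) (Fin nc) ℝ)
    (hQ : Q_cᵀ * Q_c = 1) (hQR : A_c = Q_c * R_c)
    (Ahat : Matrix (Fin m) (Fin n) ℝ)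
    (hrank : Ahat.rank ≤ k)
    (hbest : ∀ X : Matrix (Fin m) (Fin n) ℝ, X.rank ≤ k →
      ‖Q_c * Q_cᵀ * A_f - Ahat‖ ≤ ‖Q_c * Q_cᵀ * A_f - X‖)
    (σ : ℝ)
    (hσ : σ = sInf {c : ℝ | ∃ X : Matrix (Fin m) (Fin n) ℝ, X.rank ≤ k ∧ ‖A_f - X‖ = c}) :
    ‖A_f - Ahat‖ ≤ σ + ‖E_I‖ :=
  stmt17_general A_f A_c M E_I hAf Q_c R_c hQ hQR Ahat hbest σ hσ
end

section
/- Let A_f, A_c be real matrices with m rows, τ > 0, and ρ(τ) = ‖A_fA_fᵀ − τA_cA_cᵀ‖₂. Let P be the orthogonal projection onto the range of A_b^q = (τA_cA_cᵀ)^q A_f, and suppose ‖(A_fA_fᵀ)^q A_f − A_b^q‖₂ ≤ C for some C ≥ 0. Then ‖(I − P)(A_fA_fᵀ)^q A_f‖₂ ≤ C, and consequently ‖(I − P)A_f‖₂ ≤ C^{1/(2q+1)}. -/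
/-!
Put `S = T T†`. For every vector `w` the norms of `w, T†w, S w, T†S w, S² w, …` form a
log-convex sequence, since `‖R x‖² = re ⟪x, R†R x⟫ ≤ ‖x‖ ‖R†R x‖`; hence
`‖T†w‖^(2q+1) ≤ ‖T†S^q w‖ ‖w‖^(2q)`. Taking `w = Q y` for an orthogonal projection `Q` gives
`‖Q T‖^(2q+1) = ‖T†Q‖^(2q+1) ≤ ‖Q S^q T‖`. For `Q = 1 - P` the residual `Q (A_f A_fᵀ)^q A_f`
equals `Q ((A_f A_fᵀ)^q A_f - A_b)` because `Q A_b = 0`, so its norm is at most `C`.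
-/

open Matrix
open scoped Matrix.Norms.L2Operator InnerProduct

theorem mul_le_succ_mul_of_sq_le_mul {u : ℕ → ℝ} (hu : ∀ k, 0 ≤ u k)
    (h : ∀ k, u (k + 1) ^ 2 ≤ u k * u (k + 2)) (k : ℕ) : u k * u 1 ≤ u (k + 1) * u 0 := by
  induction k with
  | zero => rw [mul_comm]
  | succ k ih =>
    rcases (hu (k + 1)).eq_or_lt with hk | hk
    · rw [← hk, zero_mul]
      exact mul_nonneg (hu _) (hu _)
    · refine le_of_mul_le_mul_left ?_ hk
      calc u (k + 1) * (u (k + 1) * u 1) = u (k + 1) ^ 2 * u 1 := by ring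
        _ ≤ u k * u (k + 2) * u 1 := mul_le_mul_of_nonneg_right (h k) (hu 1)
        _ = u (k + 2) * (u k * u 1) := by ring
        _ ≤ u (k + 2) * (u (k + 1) * u 0) := mul_le_mul_of_nonneg_left ih (hu _)
        _ = u (k + 1) * (u (k + 2) * u 0) := by ring

theorem pow_succ_le_of_sq_le_mul {u : ℕ → ℝ} (hu : ∀ k, 0 ≤ u k)
    (h : ∀ k, u (k + 1) ^ 2 ≤ u k * u (k + 2)) (k : ℕ) : u 1 ^ (k + 1) ≤ u (k + 1) * u 0 ^ k := by
  induction k with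
  | zero => simp
  | succ k ih =>
    calc u 1 ^ (k + 2) = u 1 * u 1 ^ (k + 1) := by ring
      _ ≤ u 1 * (u (k + 1) * u 0 ^ k) := mul_le_mul_of_nonneg_left ih (hu 1)
      _ = u (k + 1) * u 1 * u 0 ^ k := by ring
      _ ≤ u (k + 2) * u 0 * u 0 ^ k :=
        mul_le_mul_of_nonneg_right (mul_le_succ_mul_of_sq_le_mul hu h (k + 1))
          (pow_nonneg (hu 0) k)
      _ = u (k + 2) * u 0 ^ (k + 1) := by ring

section opNorm

variable {𝕜 E F : Type*} [NontriviallyNormedField 𝕜] [SeminormedAddCommGroup E]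
  [SeminormedAddCommGroup F] [NormedSpace 𝕜 E] [NormedSpace 𝕜 F]

theorem ContinuousLinearMap.opNorm_pow_le_of_forall {p : ℕ} (hp : p ≠ 0) {K : ℝ} (hK : 0 ≤ K)
    (A : E →L[𝕜] F) (h : ∀ x, ‖A x‖ ^ p ≤ K * ‖x‖ ^ p) : ‖A‖ ^ p ≤ K := by
  have hroot : (K ^ (p⁻¹ : ℝ)) ^ p = K := Real.rpow_inv_natCast_pow hK hp
  have hA : ‖A‖ ≤ K ^ (p⁻¹ : ℝ) := by
    refine opNorm_le_bound _ (by positivity) fun x ↦ ?_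
    refine (pow_le_pow_iff_left₀ (norm_nonneg _) (by positivity) hp).mp ?_
    rw [mul_pow, hroot]
    exact h x
  exact hroot ▸ pow_le_pow_left₀ (norm_nonneg _) hA p

end opNorm

namespace ContinuousLinearMap

variable {𝕜 E F : Type*} [RCLike 𝕜] [NormedAddCommGroup E] [InnerProductSpace 𝕜 E]
  [CompleteSpace E] [NormedAddCommGroup F] [InnerProductSpace 𝕜 F] [CompleteSpace F]

theorem norm_apply_sq_le_norm_mul_norm_adjoint_apply (R : E →L[𝕜] F) (x : E) :
    ‖R x‖ ^ 2 ≤ ‖x‖ * ‖(R†) (R x)‖ := by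
  rw [apply_norm_sq_eq_inner_adjoint_right, comp_apply]
  exact (RCLike.re_le_norm _).trans (norm_inner_le_norm _ _)

/-- `krylovNorm T w` lists the norms of `w, T†w, (T T†) w, T†(T T†) w, (T T†)² w, …`. -/
noncomputable def krylovNorm (T : E →L[𝕜] F) (w : F) (j : ℕ) : ℝ :=
  if Even j then ‖((T ∘L T†) ^ (j / 2)) w‖ else ‖(T†) (((T ∘L T†) ^ (j / 2)) w)‖

variable (T : E →L[𝕜] F) (w : F)

theorem krylovNorm_two_mul (k : ℕ) : krylovNorm T w (2 * k) = ‖((T ∘L T†) ^ k) w‖ := by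
  simp [krylovNorm]

theorem krylovNorm_two_mul_add_one (k : ℕ) :
    krylovNorm T w (2 * k + 1) = ‖(T†) (((T ∘L T†) ^ k) w)‖ := by
  simp [krylovNorm, Nat.add_div_of_dvd_right]

theorem krylovNorm_nonneg (j : ℕ) : 0 ≤ krylovNorm T w j := by
  unfold krylovNorm; split_ifs <;> exact norm_nonneg _

theorem krylovNorm_sq_le (j : ℕ) :
    krylovNorm T w (j + 1) ^ 2 ≤ krylovNorm T w j * krylovNorm T w (j + 2) := by
  have hpow (k : ℕ) : ((T ∘L T†) ^ (k + 1)) w = T ((T†) (((T ∘L T†) ^ k) w)) := by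
    rw [pow_succ']; rfl
  obtain ⟨k, rfl | rfl⟩ := Nat.even_or_odd' j
  · rw [krylovNorm_two_mul_add_one, krylovNorm_two_mul, show 2 * k + 2 = 2 * (k + 1) by ring,
      krylovNorm_two_mul, hpow]
    simpa only [adjoint_adjoint] using norm_apply_sq_le_norm_mul_norm_adjoint_apply (T†) _
  · rw [show 2 * k + 1 + 1 = 2 * (k + 1) by ring, krylovNorm_two_mul, krylovNorm_two_mul_add_one,
      show 2 * k + 1 + 2 = 2 * (k + 1) + 1 by ring, krylovNorm_two_mul_add_one, hpow]
    exact norm_apply_sq_le_norm_mul_norm_adjoint_apply T _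

theorem norm_adjoint_apply_pow_le (q : ℕ) :
    ‖(T†) w‖ ^ (2 * q + 1) ≤ ‖(T†) (((T ∘L T†) ^ q) w)‖ * ‖w‖ ^ (2 * q) := by
  have := pow_succ_le_of_sq_le_mul (krylovNorm_nonneg T w) (krylovNorm_sq_le T w) (2 * q)
  have h0 : krylovNorm T w 0 = ‖w‖ := by simp [krylovNorm]
  have h1 : krylovNorm T w 1 = ‖(T†) w‖ := by simp [krylovNorm]
  rwa [h0, h1, krylovNorm_two_mul_add_one] at this

theorem norm_comp_pow_le_of_isStarProjection {Q : F →L[𝕜] F} (hQ : IsStarProjection Q) (q : ℕ) :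
    ‖Q ∘L T‖ ^ (2 * q + 1) ≤ ‖Q ∘L ((T ∘L T†) ^ q) ∘L T‖ := by
  have hQadj : Q† = Q := hQ.isSelfAdjoint
  have hSadj : ((T ∘L T†) ^ q)† = (T ∘L T†) ^ q :=
    ((isPositive_self_comp_adjoint T).isSelfAdjoint.pow q).adjoint_eq
  have hQT : ‖Q ∘L T‖ = ‖T† ∘L Q‖ := by
    rw [← adjoint.norm_map, adjoint_comp, hQadj]
  rw [hQT]
  refine opNorm_pow_le_of_forall (by omega) (norm_nonneg _) _ fun y ↦ ?_
  have hQy : ‖Q y‖ ≤ ‖y‖ := by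
    simpa using Q.le_of_opNorm_le hQ.norm_le y
  have hpow : (T†) (((T ∘L T†) ^ q) (Q y)) = ((Q ∘L ((T ∘L T†) ^ q) ∘L T)†) y := by
    rw [adjoint_comp, adjoint_comp, hQadj, hSadj]; rfl
  calc ‖(T† ∘L Q) y‖ ^ (2 * q + 1)
      ≤ ‖(T†) (((T ∘L T†) ^ q) (Q y))‖ * ‖Q y‖ ^ (2 * q) :=
        norm_adjoint_apply_pow_le T (Q y) q
    _ ≤ (‖Q ∘L ((T ∘L T†) ^ q) ∘L T‖ * ‖y‖) * ‖y‖ ^ (2 * q) := by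
        rw [hpow, ← adjoint.norm_map (Q ∘L ((T ∘L T†) ^ q) ∘L T)]
        gcongr
        exact le_opNorm _ _
    _ = ‖Q ∘L ((T ∘L T†) ^ q) ∘L T‖ * ‖y‖ ^ (2 * q + 1) := by ring

end ContinuousLinearMap

namespace Matrix

variable {𝕜 : Type*} [RCLike 𝕜] {l m n : Type*} [Fintype l] [Fintype m] [DecidableEq m]
  [Fintype n] [DecidableEq n]

/- On square matrices `Φ` is definitionally the star-algebra equivalence `toEuclideanCLM`. -/
local notation "Φ" => toEuclideanLin.trans LinearMap.toContinuousLinearMap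

theorem toEuclideanLin_trans_toContinuousLinearMap_mul (A : Matrix l m 𝕜) (B : Matrix m n 𝕜) :
    Φ (A * B) = Φ A ∘L Φ B := by
  ext x : 1
  simp

theorem toEuclideanLin_trans_toContinuousLinearMap_conjTranspose (A : Matrix m n 𝕜) :
    Φ Aᴴ = (Φ A)† := by
  simp [toEuclideanLin_conjTranspose_eq_adjoint, LinearMap.adjoint_toContinuousLinearMap]

theorem l2_opNorm_mul_pow_le_of_isStarProjection {Q : Matrix m m 𝕜} (hQ : IsStarProjection Q)
    (A : Matrix m n 𝕜) (q : ℕ) : ‖Q * A‖ ^ (2 * q + 1) ≤ ‖Q * ((A * Aᴴ) ^ q * A)‖ := by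
  have hQ' : IsStarProjection (Φ Q) := hQ.map (toEuclideanCLM (𝕜 := 𝕜))
  have hpow : Φ ((A * Aᴴ) ^ q) = (Φ A ∘L (Φ A)†) ^ q := by
    rw [← toEuclideanLin_trans_toContinuousLinearMap_conjTranspose,
      ← toEuclideanLin_trans_toContinuousLinearMap_mul]
    exact map_pow (toEuclideanCLM (𝕜 := 𝕜)) _ q
  simp only [l2_opNorm_def, toEuclideanLin_trans_toContinuousLinearMap_mul, hpow]
  exact (Φ A).norm_comp_pow_le_of_isStarProjection hQ' q

theorem l2_opNorm_one_sub_mul_le {P : Matrix m m 𝕜} (hP : IsStarProjection P) {B : Matrix m n 𝕜}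
    (hPB : P * B = B) (X : Matrix m n 𝕜) : ‖(1 - P) * X‖ ≤ ‖X - B‖ := by
  have hB : (1 - P) * B = 0 := by rw [Matrix.sub_mul, Matrix.one_mul, hPB, sub_self]
  calc ‖(1 - P) * X‖ = ‖(1 - P) * (X - B)‖ := by rw [Matrix.mul_sub, hB, sub_zero]
    _ ≤ ‖1 - P‖ * ‖X - B‖ := l2_opNorm_mul _ _
    _ ≤ ‖X - B‖ := mul_le_of_le_one_left (norm_nonneg _) hP.one_sub.norm_le

end Matrix

theorem stmt18_general {m n : ℕ}
    (A_f : Matrix (Fin m) (Fin n) ℝ) (q : ℕ)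
    (Ab : Matrix (Fin m) (Fin n) ℝ)
    (P : Matrix (Fin m) (Fin m) ℝ)
    (hPsymm : Pᵀ = P) (hPidem : P * P = P) (hPAb : P * Ab = Ab)
    (C : ℝ)
    (hC : ‖(A_f * A_fᵀ) ^ q * A_f - Ab‖ ≤ C) :
    ‖(1 - P) * ((A_f * A_fᵀ) ^ q * A_f)‖ ≤ C ∧
    ‖(1 - P) * A_f‖ ≤ C ^ ((1 : ℝ) / (2 * (q : ℝ) + 1)) := by
  have hP : IsStarProjection P :=
    ⟨hPidem, by
      rw [IsSelfAdjoint, star_eq_conjTranspose, conjTranspose_eq_transpose_of_trivial, hPsymm]⟩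
  have hresidual : ‖(1 - P) * ((A_f * A_fᵀ) ^ q * A_f)‖ ≤ C :=
    (l2_opNorm_one_sub_mul_le hP hPAb _).trans hC
  have hpow : ‖(1 - P) * A_f‖ ^ (2 * q + 1) ≤ C := by
    have := l2_opNorm_mul_pow_le_of_isStarProjection hP.one_sub A_f q
    rw [conjTranspose_eq_transpose_of_trivial] at this
    exact this.trans hresidual
  refine ⟨hresidual, ?_⟩
  have hC0 : 0 ≤ C := (pow_nonneg (norm_nonneg _) _).trans hpow
  rw [one_div, Real.le_rpow_inv_iff_of_pos (norm_nonneg _) hC0 (by positivity)]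
  exact_mod_cast hpow

/-- Coarse-grid power iteration error: let `A_b^q = (τA_cA_cᵀ)^q A_f`, let `P` be the
orthogonal projection onto the range of `A_b^q`, and suppose
`‖(A_fA_fᵀ)^q A_f - A_b^q‖ ≤ C`. Then `‖(I - P)(A_fA_fᵀ)^q A_f‖ ≤ C` and
`‖(I - P)A_f‖ ≤ C^{1/(2q+1)}`. -/
theorem stmt18 {m n nc : ℕ}
    (A_f : Matrix (Fin m) (Fin n) ℝ) (A_c : Matrix (Fin m) (Fin nc) ℝ)
    (τ : ℝ) (hτ : 0 < τ) (q : ℕ)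
    (Ab : Matrix (Fin m) (Fin n) ℝ)
    (hAb : Ab = (τ • (A_c * A_cᵀ)) ^ q * A_f)
    (P : Matrix (Fin m) (Fin m) ℝ)
    (hPsymm : Pᵀ = P) (hPidem : P * P = P) (hPAb : P * Ab = Ab)
    (C : ℝ) (hC0 : 0 ≤ C)
    (hC : ‖(A_f * A_fᵀ) ^ q * A_f - Ab‖ ≤ C) :
    ‖(1 - P) * ((A_f * A_fᵀ) ^ q * A_f)‖ ≤ C ∧
    ‖(1 - P) * A_f‖ ≤ C ^ ((1 : ℝ) / (2 * (q : ℝ) + 1)) :=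
  stmt18_general A_f q Ab P hPsymm hPidem hPAb C hC
end
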